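/- arXiv:2106.16022 — 11 statements merged into one kernel-verified Lean document; each statement's English description precedes it below -/
import Mathlib

section
/- Let g be a pdf on ℝ that is strictly positive and even (g(−x) = g(x) for all x), with cdf G(x) = ∫_{−∞}^x g(t) dt, and let k ≠ 0. Then ∫_ℝ g(x) e^{k G(|x|)} dx = 2(e^k − e^{k/2})/k; consequently f(x) = [k / (2(e^k − e^{k/2}))] g(x) e^{k G(|x|)} is an even pdf on ℝ. -/
open MeasureTheory Real Set Filter Topology

theorem stmt_2 (g : ℝ → ℝ) (k : ℝ) (hk : k ≠ 0)
    (hg_meas : Measurable g) (hg_pos : ∀ x, 0 < g x)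
    (hg_int : (∫ x, g x) = 1)
    (hg_even : ∀ x, g (-x) = g x) :
    let G : ℝ → ℝ := fun x => ∫ t in Set.Iic x, g t
    let f : ℝ → ℝ := fun x =>
      k / (2 * (Real.exp k - Real.exp (k / 2))) * (g x * Real.exp (k * G |x|))
    (∫ x, g x * Real.exp (k * G |x|)) = 2 * (Real.exp k - Real.exp (k / 2)) / k ∧
      (∀ x, 0 ≤ f x) ∧ Measurable f ∧ (∫ x, f x) = 1 ∧ ∀ x, f (-x) = f x := by
  intro G f
  have hg_int' : Integrable g := by
    by_contra h
    rw [integral_undef h] at hg_int; norm_num at hg_int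
  have hg_nonneg : ∀ x, 0 ≤ g x := fun x => (hg_pos x).le
  -- basic facts about G
  have hGsm : StrictMono G := by
    intro x y hxy
    have h1 : G y - G x = ∫ t in x..y, g t :=
      intervalIntegral.integral_Iic_sub_Iic hg_int'.integrableOn hg_int'.integrableOn
    have h2 : 0 < ∫ t in x..y, g t :=
      intervalIntegral.intervalIntegral_pos_of_pos hg_int'.intervalIntegrable hg_pos hxy
    simp only [G] at h1 ⊢
    linarith
  have hGcont : Continuous G := by
    have : ∀ x, G x = G 0 + ∫ t in (0:ℝ)..x, g t := by
      intro x
      have := intervalIntegral.integral_Iic_sub_Iic (a := (0:ℝ)) (b := x) (f := g) (μ := volume)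
        hg_int'.integrableOn hg_int'.integrableOn
      simp only [G]; linarith
    rw [funext this]
    exact continuous_const.add (intervalIntegral.continuous_primitive
      (fun a b => hg_int'.intervalIntegrable) 0)
  have hGmeas : Measurable G := hGcont.measurable
  have hGtop : Tendsto G atTop (𝓝 1) := by
    have := tendsto_setIntegral_of_monotone (μ := volume) (f := g)
      (s := fun b : ℝ => Iic b) (fun b => measurableSet_Iic)
      (fun a b hab => Iic_subset_Iic.2 hab) (by rw [iUnion_Iic]; exact hg_int'.integrableOn)
    rwa [iUnion_Iic, setIntegral_univ, hg_int] at this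
  have hGle : ∀ x, G x ≤ 1 := hGsm.monotone.ge_of_tendsto hGtop
  have hGnonneg : ∀ x, 0 ≤ G x := fun x =>
    setIntegral_nonneg measurableSet_Iic (fun t _ => hg_nonneg t)
  have hG0 : G 0 = 1/2 := by
    have h1 : (∫ x in Iic (0:ℝ), g x) = ∫ x in Ioi (0:ℝ), g x := by
      have h0 := integral_comp_neg_Iic (0:ℝ) g
      rw [neg_zero] at h0
      rw [← h0]
      exact setIntegral_congr_fun measurableSet_Iic (fun x _ => (hg_even x).symm)
    have h2 : (∫ x in Iic (0:ℝ), g x) + ∫ x in Ioi (0:ℝ), g x = 1 := by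
      rw [intervalIntegral.integral_Iic_add_Ioi hg_int'.integrableOn hg_int'.integrableOn, hg_int]
    simp only [G]
    linarith
  -- the measure with density g
  set μ : Measure ℝ := volume.withDensity (fun x => ENNReal.ofReal (g x)) with hμdef
  have hμIic : ∀ x, μ (Iic x) = ENNReal.ofReal (G x) := by
    intro x
    rw [hμdef, withDensity_apply _ measurableSet_Iic,
      ← ofReal_integral_eq_lintegral_ofReal hg_int'.integrableOn
        (ae_of_all _ (fun t => hg_nonneg t))]
  have hμuniv : μ univ = 1 := by
    rw [hμdef, withDensity_apply _ MeasurableSet.univ, Measure.restrict_univ,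
      ← ofReal_integral_eq_lintegral_ofReal hg_int' (ae_of_all _ hg_nonneg), hg_int,
      ENNReal.ofReal_one]
  have hμIoc : ∀ x y : ℝ, x ≤ y → μ (Ioc x y) = ENNReal.ofReal (G y - G x) := by
    intro x y hxy
    rw [hμdef, withDensity_apply _ measurableSet_Ioc,
      ← ofReal_integral_eq_lintegral_ofReal hg_int'.integrableOn
        (ae_of_all _ (fun t => hg_nonneg t))]
    congr 1
    have := intervalIntegral.integral_Iic_sub_Iic (a := x) (b := y) (f := g) (μ := volume)
      hg_int'.integrableOn hg_int'.integrableOn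
    rw [intervalIntegral.integral_of_le hxy] at this
    simp only [G]
    linarith
  -- the pushforward identity
  have hmap : Measure.map G (μ.restrict (Ioi 0)) = volume.restrict (Ioc (1/2) 1) := by
    haveI : IsFiniteMeasure (μ.restrict (Ioi 0)) := by
      constructor
      rw [Measure.restrict_apply_univ]
      exact lt_of_le_of_lt (measure_mono (subset_univ _)) (by rw [hμuniv]; exact ENNReal.one_lt_top)
    haveI : IsFiniteMeasure (Measure.map G (μ.restrict (Ioi 0))) := by
      constructor
      rw [Measure.map_apply hGmeas MeasurableSet.univ]
      exact lt_of_le_of_lt (measure_mono (subset_univ _))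
        (by rw [Measure.restrict_apply_univ]
            exact lt_of_le_of_lt (measure_mono (subset_univ _))
              (by rw [hμuniv]; exact ENNReal.one_lt_top))
    refine Measure.ext_of_Iic _ _ (fun u => ?_)
    rw [Measure.map_apply hGmeas measurableSet_Iic,
      Measure.restrict_apply (hGmeas measurableSet_Iic),
      Measure.restrict_apply measurableSet_Iic]
    have hIocInter : Iic u ∩ Ioc (1/2 : ℝ) 1 = Ioc (1/2) (min 1 u) := by
      rw [inter_comm, Ioc_inter_Iic]
    rw [hIocInter, Real.volume_Ioc]
    rcases le_or_gt u (1/2) with hu | hu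
    · -- low case : both sides zero
      have hempty : G ⁻¹' Iic u ∩ Ioi 0 = ∅ := by
        ext x
        simp only [mem_inter_iff, mem_preimage, mem_Iic, mem_Ioi, mem_empty_iff_false,
          iff_false, not_and]
        intro hGx hx
        have : G 0 < G x := hGsm hx
        rw [hG0] at this
        linarith
      rw [hempty]
      have : min 1 u - 1/2 ≤ 0 := by
        rcases min_le_right 1 u with h
        linarith
      rw [measure_empty, eq_comm]
      exact ENNReal.ofReal_eq_zero.2 this
    rcases lt_or_ge u 1 with hu1 | hu1
    · -- middle case
      obtain ⟨b, hb⟩ : ∃ b, u < G b := (hGtop.eventually (eventually_gt_nhds hu1)).exists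
      have hb0 : (0:ℝ) ≤ b := by
        by_contra hbneg
        push_neg at hbneg
        have := hGsm hbneg
        rw [hG0] at this
        linarith
      obtain ⟨c, hc, hGc⟩ : ∃ c ∈ Icc (0:ℝ) b, G c = u := by
        have := intermediate_value_Icc hb0 hGcont.continuousOn
        have hmem : u ∈ Icc (G 0) (G b) := ⟨by rw [hG0]; linarith, hb.le⟩
        exact this hmem
      have hpre : G ⁻¹' Iic u = Iic c := by
        ext x
        simp only [mem_preimage, mem_Iic, ← hGc]
        exact ⟨fun h => (hGsm.le_iff_le).1 h, fun h => hGsm.monotone h⟩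
      have hc0 : (0:ℝ) < c := by
        by_contra hcn
        push_neg at hcn
        have := hGsm.monotone hcn
        rw [hG0] at this
        rw [hGc] at this
        linarith
      have : Iic c ∩ Ioi 0 = Ioc 0 c := by
        ext x; simp only [mem_inter_iff, mem_Iic, mem_Ioi, mem_Ioc]; tauto
      rw [hpre, this, hμIoc 0 c hc0.le, hGc, hG0, min_eq_right hu1.le]
    · -- high case
      have hpre : G ⁻¹' Iic u = univ := by
        ext x
        simp only [mem_preimage, mem_Iic, mem_univ, iff_true]
        exact le_trans (hGle x) hu1
      have hIoi : μ (Ioi (0:ℝ)) = ENNReal.ofReal (1/2) := by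
        have h1 : μ (Iic 0) + μ (Ioi 0) = μ univ := by
          rw [← measure_union (Iic_disjoint_Ioi le_rfl) measurableSet_Ioi, Iic_union_Ioi]
        rw [hμuniv, hμIic 0, hG0] at h1
        have h2 : ENNReal.ofReal (1/2) + ENNReal.ofReal (1/2) = 1 := by
          rw [← ENNReal.ofReal_add (by norm_num) (by norm_num)]
          norm_num
        have hfin : ENNReal.ofReal (1/2 : ℝ) ≠ ⊤ := ENNReal.ofReal_ne_top
        rw [← h2] at h1
        exact (ENNReal.add_right_inj hfin).1 h1
      rw [hpre, univ_inter, hIoi, min_eq_left hu1]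
      norm_num
  -- the key integral over Ioi 0
  have hexp_meas : Measurable fun x => Real.exp (k * G x) :=
    (measurable_exp.comp (measurable_const.mul hGmeas))
  have hIoiInt : (∫ x in Ioi (0:ℝ), g x * Real.exp (k * G x)) =
      (Real.exp k - Real.exp (k/2)) / k := by
    have hd : (volume.restrict (Ioi (0:ℝ))).withDensity (fun x => ENNReal.ofReal (g x)) =
        μ.restrict (Ioi 0) := (restrict_withDensity measurableSet_Ioi _).symm
    have step1 : (∫ x in Ioi (0:ℝ), g x * Real.exp (k * G x)) =
        ∫ x, Real.exp (k * G x) ∂(μ.restrict (Ioi 0)) := by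
      rw [← hd]
      rw [show (fun x => ENNReal.ofReal (g x)) = (fun x => ((g x).toNNReal : ENNReal)) from rfl]
      rw [integral_withDensity_eq_integral_smul (hg_meas.real_toNNReal) _]
      refine setIntegral_congr_fun measurableSet_Ioi (fun x _ => ?_)
      simp [NNReal.smul_def, Real.coe_toNNReal _ (hg_nonneg x)]
    have step2 : (∫ x, Real.exp (k * G x) ∂(μ.restrict (Ioi 0))) =
        ∫ u, Real.exp (k * u) ∂(Measure.map G (μ.restrict (Ioi 0))) := by
      rw [integral_map hGmeas.aemeasurable]
      exact (measurable_exp.comp (measurable_const.mul measurable_id)).aestronglyMeasurable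
    have step3 : (∫ u, Real.exp (k * u) ∂(Measure.map G (μ.restrict (Ioi 0)))) =
        ∫ u in Ioc (1/2 : ℝ) 1, Real.exp (k * u) := by rw [hmap]
    have step4 : (∫ u in Ioc (1/2 : ℝ) 1, Real.exp (k * u)) =
        ∫ u in (1/2 : ℝ)..1, Real.exp (k * u) := by
      rw [intervalIntegral.integral_of_le (by norm_num)]
    have step5 : (∫ u in (1/2 : ℝ)..1, Real.exp (k * u)) =
        (Real.exp k - Real.exp (k/2)) / k := by
      have hderiv : ∀ u ∈ uIcc (1/2 : ℝ) 1, HasDerivAt (fun u => Real.exp (k * u) / k)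
          (Real.exp (k * u)) u := by
        intro u _
        have h1 : HasDerivAt (fun u : ℝ => k * u) k u := by
          simpa using (hasDerivAt_id u).const_mul k
        have h2 := (h1.exp).div_const k
        simpa [mul_div_assoc, mul_div_cancel_left₀, div_self hk, mul_one] using h2
      rw [intervalIntegral.integral_eq_sub_of_hasDerivAt hderiv
        ((continuous_exp.comp (continuous_const.mul continuous_id)).intervalIntegrable _ _)]
      rw [mul_one, show k * (1/2 : ℝ) = k/2 by ring]
      ring
    rw [step1, step2, step3, step4, step5]
  -- integrability of the full integrand
  set F : ℝ → ℝ := fun x => g x * Real.exp (k * G |x|) with hFdef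
  have hFmeas : Measurable F :=
    hg_meas.mul (measurable_exp.comp (measurable_const.mul (hGmeas.comp measurable_abs)))
  have hFint : Integrable F := by
    refine Integrable.mono (hg_int'.const_mul (Real.exp |k|)) hFmeas.aestronglyMeasurable
      (ae_of_all _ (fun x => ?_))
    have h1 : k * G |x| ≤ |k| := by
      rcases le_or_gt 0 k with hk0 | hk0
      · calc k * G |x| ≤ k * 1 := by
              exact mul_le_mul_of_nonneg_left (hGle _) hk0
          _ = k := mul_one k
          _ ≤ |k| := le_abs_self k
      · calc k * G |x| ≤ 0 := mul_nonpos_of_nonpos_of_nonneg hk0.le (hGnonneg _)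
          _ ≤ |k| := abs_nonneg k
    have h2 : Real.exp (k * G |x|) ≤ Real.exp |k| := Real.exp_le_exp.2 h1
    simp only [Real.norm_eq_abs]
    rw [abs_of_nonneg (mul_nonneg (hg_nonneg x) (Real.exp_pos _).le)]
    calc g x * Real.exp (k * G |x|) ≤ g x * Real.exp |k| := by
          exact mul_le_mul_of_nonneg_left h2 (hg_nonneg x)
      _ ≤ |Real.exp |k| * g x| := by rw [mul_comm]; exact le_abs_self _
  have hFeven : ∀ x, F (-x) = F x := by
    intro x
    simp only [hFdef, abs_neg, hg_even]
  -- main integral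
  have hmain : (∫ x, F x) = 2 * (Real.exp k - Real.exp (k/2)) / k := by
    have hsplit : (∫ x in Iic (0:ℝ), F x) + (∫ x in Ioi (0:ℝ), F x) = ∫ x, F x :=
      intervalIntegral.integral_Iic_add_Ioi hFint.integrableOn hFint.integrableOn
    have hIicEq : (∫ x in Iic (0:ℝ), F x) = ∫ x in Ioi (0:ℝ), F x := by
      have h1 : (∫ x in Iic (0:ℝ), F x) = ∫ x in Iic (0:ℝ), F (-x) :=
        (setIntegral_congr_fun measurableSet_Iic (fun x _ => (hFeven x).symm))
      rw [h1, integral_comp_neg_Iic, neg_zero]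
    have hIoiF : (∫ x in Ioi (0:ℝ), F x) = (Real.exp k - Real.exp (k/2)) / k := by
      rw [← hIoiInt]
      refine setIntegral_congr_fun measurableSet_Ioi (fun x hx => ?_)
      simp only [hFdef, abs_of_pos (mem_Ioi.1 hx)]
    rw [← hsplit, hIicEq, hIoiF]
    ring
  -- exp k - exp (k/2) ≠ 0
  have hE : Real.exp k - Real.exp (k/2) ≠ 0 := by
    intro h
    have : Real.exp k = Real.exp (k/2) := by linarith
    have hkk : k = k/2 := Real.exp_injective this
    exact hk (by linarith)
  refine ⟨hmain, ?_, ?_, ?_, ?_⟩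
  · intro x
    have hc : 0 ≤ k / (2 * (Real.exp k - Real.exp (k / 2))) := by
      rcases lt_or_gt_of_ne hk with hneg | hpos
      · have : Real.exp k < Real.exp (k/2) := Real.exp_lt_exp.2 (by linarith)
        have h2 : 2 * (Real.exp k - Real.exp (k/2)) < 0 := by linarith
        exact le_of_lt (div_pos_of_neg_of_neg hneg h2)
      · have : Real.exp (k/2) < Real.exp k := Real.exp_lt_exp.2 (by linarith)
        have h2 : 0 < 2 * (Real.exp k - Real.exp (k/2)) := by linarith
        exact le_of_lt (div_pos hpos h2)
    exact mul_nonneg hc (mul_nonneg (hg_nonneg x) (Real.exp_pos _).le)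
  · exact measurable_const.mul hFmeas
  · have : (∫ x, f x) = (k / (2 * (Real.exp k - Real.exp (k / 2)))) * ∫ x, F x := by
      simp only [f, hFdef]
      rw [integral_const_mul]
    rw [this, hmain]
    field_simp
  · intro x
    simp only [f]
    rw [show |(-x)| = |x| from abs_neg x, hg_even]
end

section
/- Let g be a pdf on ℝ that is strictly positive and even (g(−x) = g(x) for all x), with cdf G(x) = ∫_{−∞}^x g(t) dt, and let k > −1. Then ∫_ℝ g(x) G(|x|)^k dx = 2(1 − 2^{−(k+1)})/(k+1); consequently f(x) = [(k+1) / (2(1 − 2^{−(k+1)}))] g(x) G(|x|)^k is an even pdf on ℝ. -/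
open MeasureTheory Real Set
open Filter Topology

set_option maxHeartbeats 1000000 in
theorem stmt_3 (g : ℝ → ℝ) (k : ℝ) (hk : -1 < k)
    (hg_meas : Measurable g) (hg_pos : ∀ x, 0 < g x)
    (hg_int : (∫ x, g x) = 1)
    (hg_even : ∀ x, g (-x) = g x) :
    let G : ℝ → ℝ := fun x => ∫ t in Set.Iic x, g t
    let f : ℝ → ℝ := fun x =>
      (k + 1) / (2 * (1 - (2 : ℝ) ^ (-(k + 1)))) * (g x * G |x| ^ k)
    (∫ x, g x * G |x| ^ k) = 2 * (1 - (2 : ℝ) ^ (-(k + 1))) / (k + 1) ∧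
      (∀ x, 0 ≤ f x) ∧ Measurable f ∧ (∫ x, f x) = 1 ∧ ∀ x, f (-x) = f x := by
  intro G f
  have hg_nonneg : ∀ x, 0 ≤ g x := fun x => (hg_pos x).le
  have hgint : Integrable g := by
    by_contra h
    rw [integral_undef h] at hg_int; norm_num at hg_int
  -- G basic properties
  have hGle : ∀ ⦃x y : ℝ⦄, x ≤ y → G x ≤ G y := by
    intro x y hxy
    exact setIntegral_mono_set hgint.integrableOn (ae_of_all _ hg_nonneg)
      (HasSubset.Subset.eventuallyLE (Iic_subset_Iic.2 hxy))
  have hGadd : ∀ x y : ℝ, x ≤ y → G y = G x + ∫ t in Ioc x y, g t := by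
    intro x y h
    show (∫ t in Iic y, g t) = (∫ t in Iic x, g t) + ∫ t in Ioc x y, g t
    rw [← setIntegral_union (Iic_disjoint_Ioc le_rfl) measurableSet_Ioc hgint.integrableOn
      hgint.integrableOn, Iic_union_Ioc_eq_Iic h]
  have hGsm : StrictMono G := by
    intro x y hxy
    have h0 : 0 < ∫ t in Ioc x y, g t := by
      rw [setIntegral_pos_iff_support_of_nonneg_ae (ae_of_all _ fun t => hg_nonneg t)
        hgint.integrableOn]
      have : Function.support g ∩ Ioc x y = Ioc x y := by
        apply inter_eq_right.2
        intro t _; exact (hg_pos t).ne'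
      rw [this, Real.volume_Ioc]
      simp [hxy]
    have := hGadd x y hxy.le
    linarith
  have hGcont : Continuous G := by
    have h : ∀ x, G x = G 0 + ∫ t in (0:ℝ)..x, g t := by
      intro x
      rcases le_total 0 x with h | h
      · rw [intervalIntegral.integral_of_le h]; exact hGadd 0 x h
      · rw [intervalIntegral.integral_of_ge h]
        have := hGadd x 0 h; linarith
    have hc : Continuous fun x => G 0 + ∫ t in (0:ℝ)..x, g t :=
      continuous_const.add
        (intervalIntegral.continuous_primitive (fun a b => hgint.intervalIntegrable) 0)
    exact hc.congr (fun x => (h x).symm)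
  have hGpos : ∀ x, 0 < G x := by
    intro x
    rw [show G x = ∫ t in Iic x, g t from rfl,
      setIntegral_pos_iff_support_of_nonneg_ae (ae_of_all _ fun t => hg_nonneg t)
        hgint.integrableOn]
    have : Function.support g ∩ Iic x = Iic x := by
      apply inter_eq_right.2; intro t _; exact (hg_pos t).ne'
    rw [this]; simp
  have hGle_one : ∀ x, G x ≤ 1 := by
    intro x
    have := intervalIntegral.integral_Iic_add_Ioi (b := x) hgint.integrableOn hgint.integrableOn
    have h2 : 0 ≤ ∫ t in Ioi x, g t := setIntegral_nonneg measurableSet_Ioi fun t _ => hg_nonneg t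
    rw [hg_int] at this
    show (∫ t in Iic x, g t) ≤ 1
    linarith [this]
  have hGhalf : G 0 = 1 / 2 := by
    have h1 : (∫ t in Iic (0:ℝ), g t) = ∫ t in Ioi (0:ℝ), g t := by
      have := integral_comp_neg_Iic (0:ℝ) g
      simp only [hg_even, neg_zero] at this
      exact this
    have h3 := intervalIntegral.integral_Iic_add_Ioi (b := (0:ℝ)) hgint.integrableOn
      hgint.integrableOn
    rw [hg_int] at h3
    show (∫ t in Iic (0:ℝ), g t) = 1 / 2
    linarith
  -- the measure μ with density g
  set μ : Measure ℝ := volume.withDensity (fun x => (Real.toNNReal (g x) : ENNReal)) with hμdef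
  have hμapp : ∀ s : Set ℝ, MeasurableSet s → μ s = ENNReal.ofReal (∫ t in s, g t) := by
    intro s hs
    rw [hμdef, withDensity_apply _ hs]
    exact (ofReal_integral_eq_lintegral_ofReal hgint.integrableOn (ae_of_all _ hg_nonneg)).symm
  have hμIic : ∀ x, μ (Iic x) = ENNReal.ofReal (G x) := fun x => hμapp _ measurableSet_Iic
  have hμuniv : μ univ = 1 := by
    rw [hμapp _ MeasurableSet.univ, setIntegral_univ, hg_int, ENNReal.ofReal_one]
  haveI hμprob : IsProbabilityMeasure μ := ⟨hμuniv⟩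
  have hGtop : Tendsto G atTop (𝓝 1) := by
    have h1 := tendsto_measure_Iic_atTop μ
    rw [hμuniv] at h1
    have h2 : Tendsto (fun x => (μ (Iic x)).toReal) atTop (𝓝 (1:ENNReal).toReal) :=
      (ENNReal.tendsto_toReal ENNReal.one_ne_top).comp h1
    simp only [ENNReal.toReal_one] at h2
    refine h2.congr fun x => ?_
    rw [hμIic, ENNReal.toReal_ofReal (hGpos x).le]
  have hGbot : Tendsto G atBot (𝓝 0) := by
    have h1 : Tendsto (fun x : ℝ => μ (Ioc x 0)) atBot (𝓝 (μ (Iic 0))) :=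
      tendsto_measure_Ioc_atBot μ 0
    have h2 : Tendsto (fun x : ℝ => (μ (Ioc x 0)).toReal) atBot (𝓝 (μ (Iic 0)).toReal) :=
      (ENNReal.tendsto_toReal (measure_ne_top μ _)).comp h1
    have h3 : ∀ x : ℝ, x ≤ 0 → (μ (Ioc x 0)).toReal = G 0 - G x := by
      intro x hx
      rw [hμapp _ measurableSet_Ioc,
        ENNReal.toReal_ofReal (setIntegral_nonneg measurableSet_Ioc fun t _ => hg_nonneg t)]
      have := hGadd x 0 hx; linarith
    have h4 : Tendsto (fun x : ℝ => G 0 - G x) atBot (𝓝 (μ (Iic 0)).toReal) := by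
      refine h2.congr' ?_
      filter_upwards [eventually_le_atBot (0:ℝ)] with x hx using h3 x hx
    have h5 : (μ (Iic 0)).toReal = G 0 := by
      rw [hμIic, ENNReal.toReal_ofReal (hGpos 0).le]
    rw [h5] at h4
    have h6 : Tendsto (fun x : ℝ => G 0 - (G 0 - G x)) atBot (𝓝 (G 0 - G 0)) :=
      tendsto_const_nhds.sub h4
    simpa using h6
  -- the pushforward of μ by G is uniform on (0,1)
  have hmap : Measure.map G μ = volume.restrict (Ioo 0 1) := by
    haveI : IsProbabilityMeasure (Measure.map G μ) :=
      Measure.isProbabilityMeasure_map hGcont.measurable.aemeasurable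
    refine Measure.ext_of_Iic _ _ (fun a => ?_)
    rw [Measure.map_apply hGcont.measurable measurableSet_Iic,
      Measure.restrict_apply measurableSet_Iic]
    rcases le_or_gt a 0 with ha | ha
    · have h1 : G ⁻¹' Iic a = ∅ := by
        ext x; simp only [mem_preimage, mem_Iic, mem_empty_iff_false, iff_false, not_le]
        exact lt_of_le_of_lt ha (hGpos x)
      have h2 : Iic a ∩ Ioo 0 1 = ∅ := by
        ext x; simp only [mem_inter_iff, mem_Iic, mem_Ioo, mem_empty_iff_false, iff_false]
        rintro ⟨h, h0, _⟩; linarith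
      simp [h1, h2]
    rcases lt_or_ge a 1 with ha1 | ha1
    · obtain ⟨x0, hx0⟩ : ∃ x0, G x0 < a := (hGbot.eventually (eventually_lt_nhds ha)).exists
      obtain ⟨x1, hx1⟩ : ∃ x1, a < G x1 := (hGtop.eventually (eventually_gt_nhds ha1)).exists
      have hx01 : x0 ≤ x1 := le_of_lt (hGsm.lt_iff_lt.1 (hx0.trans hx1))
      obtain ⟨c, _, hc⟩ : ∃ c ∈ Icc x0 x1, G c = a :=
        intermediate_value_Icc hx01 (hGcont.continuousOn) ⟨hx0.le, hx1.le⟩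
      have hpre : G ⁻¹' Iic a = Iic c := by
        ext x; simp only [mem_preimage, mem_Iic, ← hc]
        exact ⟨fun h => hGsm.le_iff_le.1 h, fun h => hGsm.le_iff_le.2 h⟩
      have h2 : Iic a ∩ Ioo 0 1 = Ioc 0 a := by
        ext x; simp only [mem_inter_iff, mem_Iic, mem_Ioo, mem_Ioc]
        constructor
        · rintro ⟨h, h0, _⟩; exact ⟨h0, h⟩
        · rintro ⟨h0, h⟩; exact ⟨h, h0, lt_of_le_of_lt h ha1⟩
      rw [hpre, hμIic, hc, h2, Real.volume_Ioc]
      simp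
    · have hpre : G ⁻¹' Iic a = univ := by
        ext x; simp only [mem_preimage, mem_Iic, mem_univ, iff_true]
        exact (hGle_one x).trans ha1
      have h2 : Iic a ∩ Ioo 0 1 = Ioo 0 1 := by
        apply inter_eq_right.2
        intro x hx; exact le_trans hx.2.le ha1
      rw [hpre, hμuniv, h2, Real.volume_Ioo]
      norm_num
  -- measurability and integrability of the main integrand
  have hGabs_meas : Measurable fun x => G |x| ^ k := by
    have heq : (fun x => G |x| ^ k) = fun x => Real.exp (Real.log (G |x|) * k) := by
      funext x; rw [Real.rpow_def_of_pos (hGpos _)]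
    rw [heq]
    exact Real.measurable_exp.comp
      ((Real.measurable_log.comp (hGcont.measurable.comp measurable_abs)).mul measurable_const)
  have hF_meas : Measurable fun x => g x * G |x| ^ k := hg_meas.mul hGabs_meas
  have hGhalf_le : ∀ x : ℝ, (1/2 : ℝ) ≤ G |x| := fun x => hGhalf ▸ hGle (abs_nonneg x)
  have hpow_bd : ∀ x : ℝ, G |x| ^ k ≤ (1/2 : ℝ) ^ k + 1 := by
    intro x
    have h0 : (0:ℝ) ≤ (1/2 : ℝ) ^ k := Real.rpow_nonneg (by norm_num) k
    rcases le_or_gt 0 k with hk0 | hk0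
    · have : G |x| ^ k ≤ 1 := Real.rpow_le_one (hGpos _).le (hGle_one _) hk0
      linarith
    · have : G |x| ^ k ≤ (1/2 : ℝ) ^ k :=
        Real.rpow_le_rpow_of_nonpos (by norm_num) (hGhalf_le x) hk0.le
      linarith
  have hF_int : Integrable fun x => g x * G |x| ^ k := by
    refine Integrable.mono (hgint.const_mul ((1/2 : ℝ) ^ k + 1))
      hF_meas.aestronglyMeasurable (ae_of_all _ fun x => ?_)
    have h0 : (0:ℝ) ≤ (1/2 : ℝ) ^ k := Real.rpow_nonneg (by norm_num) k
    rw [Real.norm_eq_abs, Real.norm_eq_abs,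
      abs_of_nonneg (mul_nonneg (hg_nonneg x) (Real.rpow_nonneg (hGpos _).le k)),
      abs_of_nonneg (mul_nonneg (by linarith) (hg_nonneg x))]
    calc g x * G |x| ^ k ≤ g x * ((1/2:ℝ) ^ k + 1) :=
          mul_le_mul_of_nonneg_left (hpow_bd x) (hg_nonneg x)
      _ = ((1/2:ℝ) ^ k + 1) * g x := mul_comm _ _
  -- splitting by symmetry
  have hsplit : (∫ x, g x * G |x| ^ k) = 2 * ∫ x in Ioi (0:ℝ), g x * G x ^ k := by
    have h1 : (∫ x in Iic (0:ℝ), g x * G |x| ^ k) = ∫ x in Ioi (0:ℝ), g x * G |x| ^ k := by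
      have := integral_comp_neg_Iic (0:ℝ) (fun x => g x * G |x| ^ k)
      simp only [abs_neg, hg_even, neg_zero] at this
      exact this
    have h3 : (∫ x in Ioi (0:ℝ), g x * G |x| ^ k) = ∫ x in Ioi (0:ℝ), g x * G x ^ k := by
      refine setIntegral_congr_fun measurableSet_Ioi fun x hx => ?_
      rw [abs_of_pos hx]
    have h4 := intervalIntegral.integral_Iic_add_Ioi (b := (0:ℝ)) hF_int.integrableOn hF_int.integrableOn
    rw [← h4, h1, h3]; ring
  -- computing the half-line integral via the pushforward
  have hIoi : (∫ x in Ioi (0:ℝ), g x * G x ^ k) = (1 - (1/2 : ℝ) ^ (k+1)) / (k+1) := by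
    have hGk_meas : Measurable fun x => G x ^ k := by
      have heq : (fun x => G x ^ k) = fun x => Real.exp (Real.log (G x) * k) := by
        funext x; rw [Real.rpow_def_of_pos (hGpos _)]
      rw [heq]
      exact Real.measurable_exp.comp
        ((Real.measurable_log.comp hGcont.measurable).mul measurable_const)
    have h1 : (∫ x in Ioi (0:ℝ), g x * G x ^ k) = ∫ x in Ioi (0:ℝ), G x ^ k ∂μ := by
      rw [hμdef, setIntegral_withDensity_eq_setIntegral_smul
        (hg_meas.real_toNNReal) (fun x => G x ^ k) measurableSet_Ioi]
      refine setIntegral_congr_fun measurableSet_Ioi fun x _ => ?_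
      simp [NNReal.smul_def, Real.coe_toNNReal _ (hg_nonneg x)]
    have hrpow_aesm : AEStronglyMeasurable (fun y : ℝ => y ^ k) (Measure.map G μ) := by
      rw [hmap]
      refine ContinuousOn.aestronglyMeasurable (fun y hy => ?_) measurableSet_Ioo
      exact (Real.continuousAt_rpow_const y k (Or.inl (ne_of_gt hy.1))).continuousWithinAt
    have hpre : G ⁻¹' Ioi (1/2 : ℝ) = Ioi (0:ℝ) := by
      ext x
      simp only [mem_preimage, mem_Ioi, ← hGhalf]
      exact hGsm.lt_iff_lt
    have h2 : (∫ x in Ioi (0:ℝ), G x ^ k ∂μ) = ∫ y in Ioi (1/2 : ℝ), y ^ k ∂(Measure.map G μ) := by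
      rw [setIntegral_map measurableSet_Ioi hrpow_aesm hGcont.measurable.aemeasurable, hpre]
    have h3 : (∫ y in Ioi (1/2 : ℝ), y ^ k ∂(Measure.map G μ)) = ∫ y in Ioo (1/2 : ℝ) 1, y ^ k := by
      have hset : Ioi (1/2 : ℝ) ∩ Ioo 0 1 = Ioo (1/2 : ℝ) 1 := by
        ext y
        simp only [mem_inter_iff, mem_Ioi, mem_Ioo]
        constructor
        · rintro ⟨hy1, _, hy2⟩; exact ⟨hy1, hy2⟩
        · rintro ⟨hy1, hy2⟩; exact ⟨hy1, by linarith, hy2⟩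
      rw [hmap, Measure.restrict_restrict measurableSet_Ioi, hset]
    have h4 : (∫ y in Ioo (1/2 : ℝ) 1, y ^ k) = ∫ y in (1/2 : ℝ)..1, y ^ k := by
      rw [intervalIntegral.integral_of_le (by norm_num), integral_Ioc_eq_integral_Ioo]
    rw [h1, h2, h3, h4, integral_rpow (Or.inl hk), Real.one_rpow]
  have hhalf_pow : ((1:ℝ)/2) ^ (k+1) = (2:ℝ) ^ (-(k+1)) := by
    rw [Real.rpow_neg (by norm_num : (0:ℝ) ≤ 2), one_div,
      Real.inv_rpow (by norm_num : (0:ℝ) ≤ 2)]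
  have hmain : (∫ x, g x * G |x| ^ k) = 2 * (1 - (2:ℝ) ^ (-(k+1))) / (k+1) := by
    rw [hsplit, hIoi, hhalf_pow]; ring
  -- auxiliary positivity for the constant
  have hden_pos : (0:ℝ) < 1 - (2:ℝ) ^ (-(k+1)) := by
    have : (2:ℝ) ^ (-(k+1)) < 1 :=
      Real.rpow_lt_one_of_one_lt_of_neg (by norm_num) (by linarith)
    linarith
  have hk1 : (0:ℝ) < k + 1 := by linarith
  have hc_pos : (0:ℝ) < (k + 1) / (2 * (1 - (2:ℝ) ^ (-(k+1)))) := by positivity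
  refine ⟨hmain, ?_, ?_, ?_, ?_⟩
  · intro x
    exact mul_nonneg hc_pos.le (mul_nonneg (hg_nonneg x) (Real.rpow_nonneg (hGpos _).le k))
  · exact (hF_meas.const_mul _)
  · show (∫ x, (k + 1) / (2 * (1 - (2 : ℝ) ^ (-(k + 1)))) * (g x * G |x| ^ k)) = 1
    have hprod : (0:ℝ) < (k + 1) * (2 * (1 - (2:ℝ) ^ (-(k+1)))) :=
      mul_pos hk1 (by linarith)
    rw [integral_const_mul, hmain, div_mul_div_comm,
      mul_comm (2 * (1 - (2:ℝ) ^ (-(k+1)))) (k+1)]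
    exact div_self hprod.ne'
  · intro x
    show _ * (g (-x) * G |(-x)| ^ k) = _ * (g x * G |x| ^ k)
    rw [hg_even, abs_neg]
end

section
/- Let g be a continuously differentiable, strictly positive, even pdf on ℝ with g(x) → 0 as |x| → ∞, let G be its cdf, and let k > 0. Then the function h(x) = g(x) e^{k G(|x|)} attains its global maximum on ℝ, no global maximizer of h equals 0, and the set of global maximizers is symmetric about 0 (if m is a maximizer then so is −m); in particular h has at least two global maximum points. -/
open MeasureTheory Real Set Filter Topology

/-!
Since `G ≤ 1`, we have `h ≤ e^k g → 0` at infinity, so the continuous positive function `h`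
attains its maximum; the maximizers come in pairs `±m` because `h` is even. If `0` were a
maximizer, it would also maximize the differentiable function `q x = g x * exp (k * G x)`,
since `G` is monotone, `q ≤ h` everywhere and `q 0 = h 0`. But `g' 0 = 0` by evenness, so
`q' 0 = k * g 0 ^ 2 * exp (k * G 0) > 0`.
-/

lemma deriv_zero_of_even {f : ℝ → ℝ} (hf : ∀ x, f (-x) = f x) : deriv f 0 = 0 := by
  have h := deriv_comp_neg f 0
  simp only [hf, neg_zero] at h
  linarith

lemma Continuous.exists_forall_ge_of_tendsto_cocompact_zero {X : Type*} [TopologicalSpace X]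
    {f : X → ℝ} (hf : Continuous f) {x₀ : X} (hx₀ : 0 < f x₀)
    (hlim : Tendsto f (cocompact X) (𝓝 0)) : ∃ m, ∀ x, f x ≤ f m :=
  hf.exists_forall_ge' x₀ <| (hlim.eventually (gt_mem_nhds hx₀)).mono fun _ hx => hx.le

noncomputable def primitiveIic (g : ℝ → ℝ) (x : ℝ) : ℝ := ∫ t in Iic x, g t

section primitiveIic

variable {g : ℝ → ℝ}

lemma hasDerivAt_primitiveIic (hg : Integrable g) {x : ℝ} (hx : ContinuousAt g x) :
    HasDerivAt (primitiveIic g) (g x) x := by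
  have hsplit : ∀ y, primitiveIic g y = primitiveIic g 0 + ∫ t in (0 : ℝ)..y, g t :=
    fun y => by
      rw [primitiveIic, primitiveIic,
        ← intervalIntegral.integral_Iic_sub_Iic hg.integrableOn hg.integrableOn]
      ring
  rw [funext hsplit]
  exact (intervalIntegral.integral_hasDerivAt_right hg.intervalIntegrable
    (hg.aestronglyMeasurable.stronglyMeasurableAtFilter) hx).const_add _

lemma primitiveIic_mono (hg : Integrable g) (hg_nonneg : 0 ≤ g) : Monotone (primitiveIic g) :=
  fun _ _ hxy => setIntegral_mono_set hg.integrableOn (.of_forall hg_nonneg)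
    (.of_forall (Iic_subset_Iic.2 hxy))

lemma primitiveIic_le_integral (hg : Integrable g) (hg_nonneg : 0 ≤ g) (x : ℝ) :
    primitiveIic g x ≤ ∫ t, g t :=
  setIntegral_le_integral hg (.of_forall hg_nonneg)

end primitiveIic

noncomputable def cdfTilt (g : ℝ → ℝ) (k x : ℝ) : ℝ := g x * exp (k * primitiveIic g |x|)

section cdfTilt

variable {g : ℝ → ℝ} {k : ℝ}

lemma cdfTilt_neg (hg_even : ∀ x, g (-x) = g x) (x : ℝ) : cdfTilt g k (-x) = cdfTilt g k x := by
  simp only [cdfTilt, hg_even, abs_neg]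

lemma cdfTilt_pos (hg_pos : ∀ x, 0 < g x) (x : ℝ) : 0 < cdfTilt g k x :=
  mul_pos (hg_pos x) (exp_pos _)

lemma continuous_cdfTilt (hg : Integrable g) (hg_cont : Continuous g) :
    Continuous (cdfTilt g k) := by
  have hG : Continuous (primitiveIic g) := continuous_iff_continuousAt.2 fun x =>
    (hasDerivAt_primitiveIic hg hg_cont.continuousAt).continuousAt
  unfold cdfTilt
  fun_prop

lemma tendsto_cdfTilt_cocompact (hg : Integrable g) (hg_nonneg : 0 ≤ g) (hk : 0 ≤ k)
    (hg_top : Tendsto g atTop (𝓝 0)) (hg_bot : Tendsto g atBot (𝓝 0)) :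
    Tendsto (cdfTilt g k) (cocompact ℝ) (𝓝 0) := by
  have hg_lim : Tendsto g (cocompact ℝ) (𝓝 0) := by
    rw [cocompact_eq_atBot_atTop]
    exact hg_bot.sup hg_top
  have hbound : ∀ x, cdfTilt g k x ≤ g x * exp (k * ∫ t, g t) := fun x =>
    mul_le_mul_of_nonneg_left (exp_le_exp.2 <| mul_le_mul_of_nonneg_left
      (primitiveIic_le_integral hg hg_nonneg _) hk) (hg_nonneg x)
  refine squeeze_zero (fun x => mul_nonneg (hg_nonneg x) (exp_pos _).le) hbound ?_
  simpa using hg_lim.mul_const (exp (k * ∫ t, g t))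

lemma exists_cdfTilt_zero_lt (hg : Integrable g) (hg_nonneg : 0 ≤ g) (hg0 : 0 < g 0)
    (hg_diff : DifferentiableAt ℝ g 0) (hg_even : ∀ x, g (-x) = g x) (hk : 0 < k) :
    ∃ x, cdfTilt g k 0 < cdfTilt g k x := by
  by_contra! hmax
  set q : ℝ → ℝ := fun x => g x * exp (k * primitiveIic g x)
  have hq_le : ∀ x, q x ≤ cdfTilt g k x := fun x =>
    mul_le_mul_of_nonneg_left (exp_le_exp.2 <| mul_le_mul_of_nonneg_left
      (primitiveIic_mono hg hg_nonneg (le_abs_self x)) hk.le) (hg_nonneg x)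
  have hq_max : IsLocalMax q 0 := .of_forall fun x => by
    simpa [q, cdfTilt] using (hq_le x).trans (hmax x)
  have hq_deriv : HasDerivAt q (k * g 0 ^ 2 * exp (k * primitiveIic g 0)) 0 := by
    have := hg_diff.hasDerivAt.mul
      ((hasDerivAt_primitiveIic hg hg_diff.continuousAt).const_mul k).exp
    rw [deriv_zero_of_even hg_even] at this
    exact this.congr_deriv (by ring)
  exact (by positivity : k * g 0 ^ 2 * exp (k * primitiveIic g 0) ≠ 0)
    (hq_max.hasDerivAt_eq_zero hq_deriv)

end cdfTilt

theorem stmt_4 (g : ℝ → ℝ) (k : ℝ) (hk : 0 < k)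
    (hg_smooth : ContDiff ℝ 1 g) (hg_pos : ∀ x, 0 < g x)
    (hg_int : (∫ x, g x) = 1)
    (hg_even : ∀ x, g (-x) = g x)
    (hg_top : Filter.Tendsto g Filter.atTop (nhds 0))
    (hg_bot : Filter.Tendsto g Filter.atBot (nhds 0)) :
    let G : ℝ → ℝ := fun x => ∫ t in Set.Iic x, g t
    let h : ℝ → ℝ := fun x => g x * Real.exp (k * G |x|)
    (∃ m, ∀ x, h x ≤ h m) ∧
      (∀ m, (∀ x, h x ≤ h m) → m ≠ 0) ∧
      (∀ m, (∀ x, h x ≤ h m) → ∀ x, h x ≤ h (-m)) ∧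
      ∃ m₁ m₂, m₁ ≠ m₂ ∧ (∀ x, h x ≤ h m₁) ∧ (∀ x, h x ≤ h m₂) := by
  intro G h
  rw [show h = cdfTilt g k from rfl]
  have hg : Integrable g := .of_integral_ne_zero (by simp [hg_int])
  have hg_nonneg : 0 ≤ g := fun x => (hg_pos x).le
  obtain ⟨m, hm⟩ :=
    (continuous_cdfTilt hg hg_smooth.continuous).exists_forall_ge_of_tendsto_cocompact_zero
      (cdfTilt_pos hg_pos 0) (tendsto_cdfTilt_cocompact hg hg_nonneg hk.le hg_top hg_bot)
  have hne : ∀ m, (∀ x, cdfTilt g k x ≤ cdfTilt g k m) → m ≠ 0 := by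
    rintro m hm rfl
    obtain ⟨x, hx⟩ := exists_cdfTilt_zero_lt hg hg_nonneg (hg_pos 0)
      (hg_smooth.differentiable one_ne_zero 0) hg_even hk
    exact (hm x).not_gt hx
  have hsym : ∀ m, (∀ x, cdfTilt g k x ≤ cdfTilt g k m) →
      ∀ x, cdfTilt g k x ≤ cdfTilt g k (-m) := fun m hm x => cdfTilt_neg hg_even m ▸ hm x
  refine ⟨⟨m, hm⟩, hne, hsym, m, -m, fun hm_neg => hne m hm ?_, hm, hsym m hm⟩
  linarith
end

section
/- Let g : ℝ → ℝ be strictly increasing on (−∞, k] and strictly decreasing on [k, ∞) (so g has a strict global mode at k), and let h : ℝ → ℝ be strictly convex and symmetric about d (h(2d−x) = h(x) for all x). Then: (i) if k ≤ h(d), the composition g∘h attains its global maximum exactly at the single point x = d; (ii) if k > h(d), the global maximizers of g∘h are exactly the points x with h(x) = k, there are exactly two such points, and they are of the form x₀ and 2d − x₀; in particular every mode x of g∘h with x ≠ d satisfies h(x) = k. -/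
/-!
A strictly convex `h` symmetric about `d` has its strict minimum at `d`, since `d` is the midpoint
of `x` and `2d - x`; it is strictly increasing on `[d, ∞)` and unbounded there, so every value
above `h d` is taken exactly twice, at `x₀ > d` and at its mirror image `2d - x₀`. Since `g` has a
strict maximum at `k`, `g ∘ h` is maximal exactly where `h` comes closest to `k`: at `d` if
`k ≤ h d`, and on the level set `{h = k}` otherwise.
-/

open Set Filter

section Modes

variable {α : Type*} {g : ℝ → ℝ} {h : α → ℝ} {k : ℝ}

lemma apply_lt_of_strictMonoOn_Iic_of_strictAntiOn_Ici (hg_inc : StrictMonoOn g (Iic k))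
    (hg_dec : StrictAntiOn g (Ici k)) {y : ℝ} (hy : y ≠ k) : g y < g k := by
  rcases hy.lt_or_gt with hyk | hky
  · exact hg_inc hyk.le self_mem_Iic hyk
  · exact hg_dec self_mem_Ici hky.le hky

lemma setOf_forall_comp_le_eq_preimage (hg : ∀ y ≠ k, g y < g k) (hk : ∃ x, h x = k) :
    {x | ∀ y, g (h y) ≤ g (h x)} = {x | h x = k} := by
  obtain ⟨x₀, hx₀⟩ := hk
  ext x
  refine ⟨fun hx => ?_, fun hx y => ?_⟩
  · by_contra hne
    have := hx x₀
    rw [hx₀] at this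
    exact (hg _ hne).not_ge this
  · rw [show h x = k from hx]
    rcases eq_or_ne (h y) k with hy | hy
    · rw [hy]
    · exact (hg _ hy).le

lemma setOf_forall_comp_le_eq_singleton {d : α} (hg : StrictAntiOn g (Ici (h d)))
    (hmin : ∀ x ≠ d, h d < h x) : {x | ∀ y, g (h y) ≤ g (h x)} = {d} := by
  have hlt : ∀ x ≠ d, g (h x) < g (h d) := fun x hx =>
    hg self_mem_Ici (hmin x hx).le (hmin x hx)
  ext x
  refine ⟨fun hx => ?_, fun hx y => ?_⟩
  · by_contra hne
    exact (hlt x hne).not_ge (hx d)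
  · rw [mem_singleton_iff.1 hx]
    rcases eq_or_ne y d with rfl | hy
    · exact le_rfl
    · exact (hlt y hy).le

end Modes

section SymmetricConvex

variable {f : ℝ → ℝ} {d : ℝ}

lemma StrictConvexOn.apply_center_lt (hf : StrictConvexOn ℝ univ f)
    (hsym : ∀ x, f (2 * d - x) = f x) {x : ℝ} (hx : x ≠ d) : f d < f x := by
  have hne : x ≠ 2 * d - x := fun h => hx (by linarith)
  have key := hf.2 (mem_univ x) (mem_univ (2 * d - x)) hne one_half_pos one_half_pos
    (by norm_num)
  have hmid : (1 / 2 : ℝ) • x + (1 / 2 : ℝ) • (2 * d - x) = d := by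
    simp only [smul_eq_mul]; ring
  rw [hmid, hsym, smul_eq_mul] at key
  linarith

lemma ConvexOn.strictMonoOn_Ici_of_forall_lt (hf : ConvexOn ℝ univ f)
    (hmin : ∀ x ≠ d, f d < f x) : StrictMonoOn f (Ici d) := by
  intro u hu v hv huv
  rcases (mem_Ici.1 hu).eq_or_lt with rfl | hdu
  · exact hmin v huv.ne'
  · exact hf.strictMonoOn (mem_univ d) hdu (hmin u hdu.ne') ⟨mem_univ u, self_mem_Ici⟩
      ⟨mem_univ v, huv.le⟩ huv

lemma ConvexOn.tendsto_atTop_of_lt (hf : ConvexOn ℝ univ f) {a b : ℝ} (hab : a < b)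
    (hfab : f a < f b) : Tendsto f atTop atTop := by
  set s := (f b - f a) / (b - a)
  have hs : 0 < s := div_pos (sub_pos.2 hfab) (sub_pos.2 hab)
  have hline : Tendsto (fun x => f a + s * (x - a)) atTop atTop :=
    tendsto_atTop_add_const_left _ _
      ((tendsto_id.atTop_add tendsto_const_nhds).const_mul_atTop hs)
  refine tendsto_atTop_mono' _ ?_ hline
  filter_upwards [eventually_ge_atTop b] with x hbx
  have hsec := hf.secant_mono (mem_univ a) (mem_univ b) (mem_univ x) hab.ne' (by linarith) hbx
  rw [le_div_iff₀ (by linarith)] at hsec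
  linarith

lemma StrictConvexOn.exists_center_lt_apply_eq (hf : StrictConvexOn ℝ univ f)
    (hsym : ∀ x, f (2 * d - x) = f x) {k : ℝ} (hk : f d < k) : ∃ x₀, d < x₀ ∧ f x₀ = k := by
  have htop := hf.convexOn.tendsto_atTop_of_lt (lt_add_one d)
    (hf.apply_center_lt hsym (lt_add_one d).ne')
  obtain ⟨b, hkb, hdb⟩ := ((htop.eventually_gt_atTop k).and (eventually_ge_atTop d)).exists
  have hcont : Continuous f := continuousOn_univ.1 (hf.convexOn.continuousOn isOpen_univ)
  obtain ⟨x₀, hx₀, hfx₀⟩ := intermediate_value_Icc hdb hcont.continuousOn ⟨hk.le, hkb.le⟩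
  refine ⟨x₀, hx₀.1.lt_of_ne ?_, hfx₀⟩
  rintro rfl
  exact hk.ne hfx₀

lemma StrictConvexOn.setOf_apply_eq_eq_pair (hf : StrictConvexOn ℝ univ f)
    (hsym : ∀ x, f (2 * d - x) = f x) {x₀ : ℝ} (hdx₀ : d < x₀) :
    {x | f x = f x₀} = {x₀, 2 * d - x₀} := by
  have hmono := hf.convexOn.strictMonoOn_Ici_of_forall_lt fun x => hf.apply_center_lt hsym
  have hx₀ : x₀ ∈ Ici d := hdx₀.le
  ext x
  simp only [mem_ofPred_eq, mem_insert_iff, mem_singleton_iff]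
  constructor
  · intro hx
    rcases le_or_gt d x with hdx | hxd
    · exact Or.inl (hmono.injOn hdx hx₀ hx)
    · have hmirror : 2 * d - x ∈ Ici d := by rw [mem_Ici]; linarith
      right
      linarith [hmono.injOn hmirror hx₀ ((hsym x).trans hx)]
  · rintro (rfl | rfl)
    · rfl
    · exact hsym x₀

end SymmetricConvex

theorem stmt_5 (g h : ℝ → ℝ) (k d : ℝ)
    (hg_inc : StrictMonoOn g (Set.Iic k))
    (hg_dec : StrictAntiOn g (Set.Ici k))
    (hh_conv : StrictConvexOn ℝ Set.univ h)
    (hh_sym : ∀ x, h (2 * d - x) = h x) :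
    (k ≤ h d → {x : ℝ | ∀ y, g (h y) ≤ g (h x)} = {d}) ∧
      (h d < k →
        {x : ℝ | ∀ y, g (h y) ≤ g (h x)} = {x : ℝ | h x = k} ∧
        ∃ x₀ : ℝ, x₀ ≠ d ∧ {x : ℝ | h x = k} = {x₀, 2 * d - x₀} ∧
          x₀ ≠ 2 * d - x₀) ∧
      ∀ x : ℝ, (∀ y, g (h y) ≤ g (h x)) → x ≠ d → h x = k := by
  have hmin : ∀ x ≠ d, h d < h x := fun x => hh_conv.apply_center_lt hh_sym
  have part1 : k ≤ h d → {x : ℝ | ∀ y, g (h y) ≤ g (h x)} = {d} := fun hkd =>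
    setOf_forall_comp_le_eq_singleton (hg_dec.mono (Ici_subset_Ici.2 hkd)) hmin
  have part2 : h d < k → {x : ℝ | ∀ y, g (h y) ≤ g (h x)} = {x : ℝ | h x = k} ∧
      ∃ x₀ : ℝ, x₀ ≠ d ∧ {x : ℝ | h x = k} = {x₀, 2 * d - x₀} ∧ x₀ ≠ 2 * d - x₀ := by
    intro hdk
    obtain ⟨x₀, hdx₀, rfl⟩ := hh_conv.exists_center_lt_apply_eq hh_sym hdk
    refine ⟨setOf_forall_comp_le_eq_preimage
      (fun y => apply_lt_of_strictMonoOn_Iic_of_strictAntiOn_Ici hg_inc hg_dec) ⟨x₀, rfl⟩,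
      x₀, hdx₀.ne', hh_conv.setOf_apply_eq_eq_pair hh_sym hdx₀, fun heq => by linarith⟩
  refine ⟨part1, part2, fun x hx hxd => ?_⟩
  rcases le_or_gt k (h d) with hkd | hdk
  · exact absurd ((part1 hkd).subset hx) hxd
  · exact (part2 hdk).1.subset hx
end

section
/- Let g be a strictly positive pdf on ℝ that is symmetric about k (g(2k−x) = g(x) for all x) with cdf G, let λ ∈ ℝ, and let F : ℝ → [0,1] be a measurable function satisfying F(x) + F(−x) = 1 for all x ∈ ℝ (e.g. an absolutely continuous cdf whose derivative is symmetric about 0). Then ∫_ℝ g(|x|) F(λx) dx = 1 − G(0) = G(2k), so that f(x) = g(|x|) F(λx) / G(2k) is a pdf on ℝ. -/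
open MeasureTheory Real Set

theorem stmt_7 (g F : ℝ → ℝ) (k lam : ℝ)
    (hg_meas : Measurable g) (hg_pos : ∀ x, 0 < g x)
    (hg_int : (∫ x, g x) = 1)
    (hg_sym : ∀ x, g (2 * k - x) = g x)
    (hF_meas : Measurable F)
    (hF_range : ∀ x, F x ∈ Set.Icc (0 : ℝ) 1)
    (hF_skew : ∀ x, F x + F (-x) = 1) :
    let G : ℝ → ℝ := fun x => ∫ t in Set.Iic x, g t
    let f : ℝ → ℝ := fun x => g |x| * F (lam * x) / G (2 * k)
    (∫ x, g |x| * F (lam * x)) = 1 - G 0 ∧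
      (∫ x, g |x| * F (lam * x)) = G (2 * k) ∧
      (∀ x, 0 ≤ f x) ∧ Measurable f ∧ (∫ x, f x) = 1 := by
  intro G f
  -- integrability of g
  have hgint : Integrable g := integrable_of_integral_eq_one hg_int
  have hgnegint : Integrable (fun x : ℝ => g (-x)) :=
    ((Measure.measurePreserving_neg (volume : Measure ℝ)).integrable_comp
      hg_meas.aestronglyMeasurable).mpr hgint
  -- integrability of g ∘ |·|
  have habs_meas : Measurable fun x : ℝ => g |x| := hg_meas.comp measurable_abs
  have habs_int : Integrable (fun x : ℝ => g |x|) := by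
    refine (hgint.add hgnegint).mono' habs_meas.aestronglyMeasurable ?_
    filter_upwards with x
    rcases abs_choice x with h | h <;> rw [Real.norm_eq_abs, abs_of_nonneg (hg_pos _).le, h]
    · exact le_add_of_nonneg_right (hg_pos _).le
    · exact le_add_of_nonneg_left (hg_pos _).le
  -- integrability of the integrand
  have hh_meas : Measurable fun x : ℝ => g |x| * F (lam * x) :=
    habs_meas.mul (hF_meas.comp (measurable_const_mul lam))
  have hh_int : Integrable (fun x : ℝ => g |x| * F (lam * x)) := by
    refine habs_int.mono' hh_meas.aestronglyMeasurable ?_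
    filter_upwards with x
    rw [Real.norm_eq_abs, abs_mul, abs_of_nonneg (hg_pos _).le,
      abs_of_nonneg (hF_range (lam * x)).1]
    calc g |x| * F (lam * x) ≤ g |x| * 1 :=
          mul_le_mul_of_nonneg_left (hF_range (lam * x)).2 (hg_pos _).le
      _ = g |x| := mul_one _
  -- half-sum identity
  set I : ℝ := ∫ x, g |x| * F (lam * x) with hI
  have hneg : (∫ x, g |-x| * F (lam * -x)) = I := integral_neg_eq_self (fun x => g |x| * F (lam * x)) volume
  have hsplit : (∫ x, g |-x| * F (lam * -x)) = (∫ x, g |x|) - I := by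
    have : ∀ x : ℝ, g |-x| * F (lam * -x) = g |x| - g |x| * F (lam * x) := by
      intro x
      have h1 : F (lam * -x) = 1 - F (lam * x) := by
        have := hF_skew (lam * x)
        rw [mul_neg]
        linarith
      rw [abs_neg, h1]
      ring
    simp_rw [this]
    rw [integral_sub habs_int hh_int]
  have h2I : 2 * I = ∫ x, g |x| := by
    have := hneg.symm.trans hsplit
    linarith
  have habs_val : (∫ x, g |x|) = 2 * ∫ x in Ioi (0 : ℝ), g x := integral_comp_abs
  have hIval : I = ∫ x in Ioi (0 : ℝ), g x := by
    have := h2I.trans habs_val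
    linarith
  -- G 0 + ∫_{Ioi 0} g = 1
  have hsum : G 0 + (∫ x in Ioi (0 : ℝ), g x) = 1 := by
    rw [show G 0 = ∫ x in Iic (0 : ℝ), g x from rfl,
      intervalIntegral.integral_Iic_add_Ioi hgint.integrableOn hgint.integrableOn, hg_int]
  -- G (2k) = ∫_{Ioi 0} g
  have hmp : MeasurePreserving (fun x : ℝ => 2 * k - x) volume volume := by
    have : (fun x : ℝ => 2 * k - x) = (fun x : ℝ => 2 * k + x) ∘ (fun x : ℝ => -x) := by
      funext x; simp [sub_eq_add_neg]
    rw [this]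
    exact (measurePreserving_add_left volume (2 * k)).comp
      (Measure.measurePreserving_neg volume)
  have hemb : MeasurableEmbedding (fun x : ℝ => 2 * k - x) := by
    have : (fun x : ℝ => 2 * k - x) = (fun x : ℝ => 2 * k + x) ∘ (fun x : ℝ => -x) := by
      funext x; simp [sub_eq_add_neg]
    rw [this]
    exact ((Homeomorph.addLeft (2 * k)).measurableEmbedding).comp
      (Homeomorph.neg ℝ).measurableEmbedding
  have hG2k : G (2 * k) = ∫ x in Ioi (0 : ℝ), g x := by
    have hpre : (fun x : ℝ => 2 * k - x) ⁻¹' (Iic (2 * k)) = Ici (0 : ℝ) := by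
      ext x
      simp only [mem_preimage, mem_Iic, mem_Ici]
      constructor <;> intro h <;> linarith
    have := hmp.setIntegral_preimage_emb hemb g (Iic (2 * k))
    rw [hpre] at this
    calc G (2 * k) = ∫ x in Iic (2 * k), g x := rfl
      _ = ∫ x in Ici (0 : ℝ), g (2 * k - x) := this.symm
      _ = ∫ x in Ici (0 : ℝ), g x := by simp_rw [hg_sym]
      _ = ∫ x in Ioi (0 : ℝ), g x := integral_Ici_eq_integral_Ioi
  -- positivity of G (2k)
  have hG2k_pos : 0 < G (2 * k) := by
    rw [hG2k]
    rw [setIntegral_pos_iff_support_of_nonneg_ae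
      (Filter.Eventually.of_forall fun x => (hg_pos x).le) hgint.integrableOn]
    have : Function.support g = univ := by
      ext x; simp [Function.support, (hg_pos x).ne']
    rw [this, univ_inter]
    simp [Real.volume_Ioi]
  refine ⟨?_, ?_, ?_, ?_, ?_⟩
  · rw [hIval]; linarith
  · rw [hIval, hG2k]
  · intro x
    exact div_nonneg (mul_nonneg (hg_pos _).le (hF_range _).1) hG2k_pos.le
  · exact hh_meas.div_const _
  · show (∫ x, g |x| * F (lam * x) / G (2 * k)) = 1
    rw [integral_div, ← hI, hIval, hG2k, div_self]
    rw [← hG2k]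
    exact hG2k_pos.ne'
end

section
/- For every k > 0 and b ∈ ℝ, ∫_ℝ (1 + (u − b)²) e^{−k|u|} du = (2/k)(1 + b² + 2/k²). Consequently, for μ ∈ ℝ, σ > 0ortion and a ∈ ℝ, the Bimodal-Unimodal Laplace function f(x) = (k/(σc)) (1 + ((x−μ)/σ − a/σ)²) e^{−k|(x−μ)/σ|} with c = 2(1 + a²/σ² + 2/k²) is a pdf on ℝ. -/
/-!
Against the even weight `e^{-k|u|}` the odd term of `1 + (u - b)² = (1 + b²) - 2bu + u²`
integrates to zero, and the even moments are Gamma integrals,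
`∫ |u|ⁿ e^{-k|u|} du = 2 n! / k^(n+1)`. The density statement then follows from the
substitution `u = (x - μ) / σ`, which contributes the factor `σ`.
-/

open MeasureTheory Real Set
open scoped Nat

theorem integral_pow_mul_exp_neg_mul_Ioi {k : ℝ} (hk : 0 < k) (n : ℕ) :
    ∫ t in Ioi (0 : ℝ), t ^ n * exp (-(k * t)) = n ! / k ^ (n + 1) := by
  have h := integral_rpow_mul_exp_neg_mul_Ioi (a := n + 1) (by positivity) hk
  simp only [add_sub_cancel_right, rpow_natCast, Gamma_nat_eq_factorial] at h
  rw [h, ← Nat.cast_add_one, rpow_natCast, one_div_pow, one_div_mul_eq_div]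

theorem integral_abs_pow_mul_exp_neg_mul_abs {k : ℝ} (hk : 0 < k) (n : ℕ) :
    ∫ x, |x| ^ n * exp (-(k * |x|)) = 2 * n ! / k ^ (n + 1) := by
  rw [integral_comp_abs (f := fun t ↦ t ^ n * exp (-(k * t))),
    integral_pow_mul_exp_neg_mul_Ioi hk, mul_div_assoc]

theorem integrable_abs_pow_mul_exp_neg_mul_abs {k : ℝ} (hk : 0 < k) (n : ℕ) :
    Integrable fun x ↦ |x| ^ n * exp (-(k * |x|)) :=
  .of_integral_ne_zero <| by rw [integral_abs_pow_mul_exp_neg_mul_abs hk]; positivity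

theorem integrable_mul_exp_neg_mul_abs {k : ℝ} (hk : 0 < k) :
    Integrable fun x ↦ x * exp (-(k * |x|)) :=
  (integrable_abs_pow_mul_exp_neg_mul_abs hk 1).mono' (by fun_prop) <| .of_forall fun x ↦ by
    rw [norm_mul, norm_eq_abs, norm_of_nonneg (exp_pos _).le, pow_one]

theorem integral_mul_exp_neg_mul_abs (k : ℝ) : ∫ x, x * exp (-(k * |x|)) = 0 := by
  have h := integral_neg_eq_self (fun x : ℝ ↦ x * exp (-(k * |x|))) volume
  simp only [abs_neg, neg_mul, integral_neg] at h
  linarith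

theorem integral_one_add_sub_sq_mul_exp_neg_mul_abs {k : ℝ} (hk : 0 < k) (b : ℝ) :
    ∫ u, (1 + (u - b) ^ 2) * exp (-(k * |u|)) = 2 / k * (1 + b ^ 2 + 2 / k ^ 2) := by
  have h₀ := integrable_abs_pow_mul_exp_neg_mul_abs hk 0
  have h₂ := integrable_abs_pow_mul_exp_neg_mul_abs hk 2
  have hJ₀ := integral_abs_pow_mul_exp_neg_mul_abs hk 0
  have hJ₂ := integral_abs_pow_mul_exp_neg_mul_abs hk 2
  simp only [pow_zero, one_mul, sq_abs] at h₀ h₂ hJ₀ hJ₂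
  have h₀₂ : Integrable fun u : ℝ ↦
      (1 + b ^ 2) * exp (-(k * |u|)) + u ^ 2 * exp (-(k * |u|)) := (h₀.const_mul _).add h₂
  have hsplit : (fun u : ℝ ↦ (1 + (u - b) ^ 2) * exp (-(k * |u|))) = fun u ↦
      ((1 + b ^ 2) * exp (-(k * |u|)) + u ^ 2 * exp (-(k * |u|)))
        - 2 * b * (u * exp (-(k * |u|))) := by
    funext u; ring
  rw [hsplit, integral_sub h₀₂ ((integrable_mul_exp_neg_mul_abs hk).const_mul _),
    integral_add (h₀.const_mul _) h₂, integral_const_mul, integral_const_mul, hJ₀, hJ₂,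
    integral_mul_exp_neg_mul_abs]
  field_simp
  norm_num
  ring

theorem integral_comp_sub_div {E : Type*} [NormedAddCommGroup E] [NormedSpace ℝ E]
    (g : ℝ → E) (μ : ℝ) {σ : ℝ} (hσ : 0 < σ) :
    ∫ x, g ((x - μ) / σ) = σ • ∫ u, g u := by
  rw [integral_sub_right_eq_self (fun x ↦ g (x / σ)), Measure.integral_comp_div, abs_of_pos hσ]

theorem stmt_10 (k : ℝ) (hk : 0 < k) :
    (∀ b : ℝ, (∫ u, (1 + (u - b) ^ 2) * Real.exp (-(k * |u|)))
        = (2 / k) * (1 + b ^ 2 + 2 / k ^ 2)) ∧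
      ∀ (μ σ a : ℝ), 0 < σ →
        let c : ℝ := 2 * (1 + a ^ 2 / σ ^ 2 + 2 / k ^ 2)
        let f : ℝ → ℝ := fun x =>
          k / (σ * c) * (1 + ((x - μ) / σ - a / σ) ^ 2) *
            Real.exp (-(k * |(x - μ) / σ|))
        (∀ x, 0 ≤ f x) ∧ (∫ x, f x) = 1 := by
  refine ⟨integral_one_add_sub_sq_mul_exp_neg_mul_abs hk,
    fun μ σ a hσ ↦ ⟨fun x ↦ by positivity, ?_⟩⟩
  have hscale := integral_comp_sub_div (fun u ↦ (1 + (u - a / σ) ^ 2) * exp (-(k * |u|))) μ hσ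
  rw [integral_one_add_sub_sq_mul_exp_neg_mul_abs hk, smul_eq_mul] at hscale
  simp only [mul_assoc, integral_const_mul, hscale]
  field_simp
end

section
/- Let φ be the standard normal density and Φ its cdf. For all k, λ ∈ ℝ, ∫_ℝ φ(|x| − k) Φ(λx) dx = Φ(k); consequently f(x) = φ(|x| − k) Φ(λx) / Φ(k) is a pdf on ℝ. -/
open MeasureTheory Real Set

noncomputable def phi (x : ℝ) : ℝ := (Real.sqrt (2 * Real.pi))⁻¹ * Real.exp (-(x ^ 2) / 2)

noncomputable def Phi (x : ℝ) : ℝ := ∫ t in Set.Iic x, phi t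

lemma phi_nonneg (x : ℝ) : 0 ≤ phi x := by
  unfold phi
  positivity

lemma phi_pos (x : ℝ) : 0 < phi x := by
  unfold phi
  positivity

lemma phi_even (x : ℝ) : phi (-x) = phi x := by
  unfold phi; ring_nf

lemma phi_eq (x : ℝ) : phi x = (Real.sqrt (2 * Real.pi))⁻¹ * Real.exp (-(1/2 : ℝ) * x ^ 2) := by
  unfold phi; ring_nf

lemma integrable_phi : Integrable phi := by
  have h : Integrable (fun x : ℝ => Real.exp (-(1/2 : ℝ) * x ^ 2)) :=
    integrable_exp_neg_mul_sq (by norm_num)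
  have := h.const_mul (Real.sqrt (2 * Real.pi))⁻¹
  apply this.congr
  filter_upwards with x
  rw [phi_eq]

lemma measurable_phi : Measurable phi := by
  unfold phi
  fun_prop

lemma integral_phi : ∫ x, phi x = 1 := by
  have h : ∫ x : ℝ, Real.exp (-(1/2 : ℝ) * x ^ 2) = Real.sqrt (Real.pi / (1/2)) :=
    integral_gaussian (1/2)
  have h2 : ∫ x, phi x = (Real.sqrt (2 * Real.pi))⁻¹ * Real.sqrt (Real.pi / (1/2)) := by
    rw [← h, ← integral_const_mul]
    congr 1; funext x; rw [phi_eq]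
  rw [h2]
  rw [show Real.pi / (1/2) = 2 * Real.pi by ring]
  rw [inv_mul_cancel₀]
  positivity

lemma Phi_nonneg (x : ℝ) : 0 ≤ Phi x :=
  setIntegral_nonneg measurableSet_Iic fun t _ => phi_nonneg t

lemma Phi_le_one (x : ℝ) : Phi x ≤ 1 := by
  rw [← integral_phi]
  exact setIntegral_le_integral integrable_phi (Filter.Eventually.of_forall phi_nonneg)

lemma Phi_add_neg (x : ℝ) : Phi x + Phi (-x) = 1 := by
  have h1 : Phi (-x) = ∫ t in Ioi x, phi t := by
    have h := integral_comp_neg_Iic (-x) phi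
    rw [neg_neg] at h
    unfold Phi
    rw [← h]
    exact setIntegral_congr_fun measurableSet_Iic fun t _ => (phi_even t).symm
  rw [h1]
  unfold Phi
  rw [intervalIntegral.integral_Iic_add_Ioi integrable_phi.integrableOn integrable_phi.integrableOn, integral_phi]

lemma Phi_pos (x : ℝ) : 0 < Phi x := by
  unfold Phi
  rw [setIntegral_pos_iff_support_of_nonneg_ae
    (Filter.Eventually.of_forall phi_nonneg) integrable_phi.integrableOn]
  have : Function.support phi = Set.univ := by
    ext t; simp [Function.support, (phi_pos t).ne']
  rw [this, Set.univ_inter]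
  simp [Real.volume_Iic]

lemma Phi_monotone : Monotone Phi := fun a b hab =>
  setIntegral_mono_set integrable_phi.integrableOn
    (Filter.Eventually.of_forall phi_nonneg) (HasSubset.Subset.eventuallyLE (Iic_subset_Iic.mpr hab))

lemma measurable_Phi : Measurable Phi := Phi_monotone.measurable

lemma integrable_main (k lam : ℝ) : Integrable (fun x => phi (|x| - k) * Phi (lam * x)) := by
  have hdom : Integrable (fun x : ℝ => phi (x - k) + phi (x + k)) := by
    have h1 : Integrable (fun x : ℝ => phi (x - k)) := integrable_phi.comp_sub_right k
    have h2 : Integrable (fun x : ℝ => phi (x + k)) := integrable_phi.comp_add_right k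
    exact h1.add h2
  apply hdom.mono
  · apply Measurable.aestronglyMeasurable
    exact ((measurable_phi.comp ((measurable_abs).sub measurable_const)).mul
      (measurable_Phi.comp (measurable_const.mul measurable_id)))
  · filter_upwards with x
    rw [Real.norm_eq_abs, Real.norm_eq_abs]
    have h1 : 0 ≤ phi (x - k) + phi (x + k) := by
      have := phi_nonneg (x - k); have := phi_nonneg (x + k); linarith
    rw [abs_of_nonneg h1, abs_of_nonneg (mul_nonneg (phi_nonneg _) (Phi_nonneg _))]
    have hb : phi (|x| - k) * Phi (lam * x) ≤ phi (|x| - k) * 1 :=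
      mul_le_mul_of_nonneg_left (Phi_le_one _) (phi_nonneg _)
    rw [mul_one] at hb
    refine hb.trans ?_
    rcases le_or_gt 0 x with hx | hx
    · rw [abs_of_nonneg hx]
      have := phi_nonneg (x + k); linarith
    · rw [abs_of_neg hx]
      have : phi (-x - k) = phi (x + k) := by rw [← phi_even (x + k)]; ring_nf
      rw [this]
      have := phi_nonneg (x - k); linarith

lemma integrableOn_piece (k c : ℝ) :
    IntegrableOn (fun x => phi (x - k) * Phi (c * x)) (Ioi 0) := by
  have h1 : IntegrableOn (fun x : ℝ => phi (x - k)) (Ioi 0) :=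
    (integrable_phi.comp_sub_right k).integrableOn
  apply Integrable.mono h1
  · apply Measurable.aestronglyMeasurable
    exact ((measurable_phi.comp (measurable_id.sub measurable_const)).mul
      (measurable_Phi.comp (measurable_const.mul measurable_id)))
  · filter_upwards with x
    rw [Real.norm_eq_abs, Real.norm_eq_abs, abs_of_nonneg (phi_nonneg _),
      abs_of_nonneg (mul_nonneg (phi_nonneg _) (Phi_nonneg _))]
    calc phi (x - k) * Phi (c * x) ≤ phi (x - k) * 1 :=
          mul_le_mul_of_nonneg_left (Phi_le_one _) (phi_nonneg _)
      _ = phi (x - k) := mul_one _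

lemma integral_shift_Ioi (k : ℝ) :
    ∫ x in Ioi (0:ℝ), phi (x - k) = ∫ x in Ioi (-k), phi x := by
  rw [← integral_indicator measurableSet_Ioi, ← integral_indicator measurableSet_Ioi]
  have : ∀ x : ℝ, (Ioi (0:ℝ)).indicator (fun x => phi (x - k)) x
      = (Ioi (-k)).indicator phi (x - k) := by
    intro x
    by_cases hx : x ∈ Ioi (0:ℝ)
    · rw [Set.indicator_of_mem hx, Set.indicator_of_mem (by simp at hx ⊢; linarith)]
    · rw [Set.indicator_of_notMem hx, Set.indicator_of_notMem (by simp at hx ⊢; linarith)]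
  simp_rw [this]
  exact integral_sub_right_eq_self ((Ioi (-k)).indicator phi) k

lemma integral_main (k lam : ℝ) : (∫ x, phi (|x| - k) * Phi (lam * x)) = Phi k := by
  set g : ℝ → ℝ := fun x => phi (|x| - k) * Phi (lam * x) with hg
  have hint := integrable_main k lam
  have hsplit : (∫ x, g x) = (∫ x in Iic (0:ℝ), g x) + ∫ x in Ioi (0:ℝ), g x :=
    (intervalIntegral.integral_Iic_add_Ioi hint.integrableOn hint.integrableOn).symm
  have hneg : (∫ x in Iic (0:ℝ), g x) = ∫ x in Ioi (0:ℝ), phi (x - k) * Phi (-lam * x) := by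
    have := integral_comp_neg_Iic (0:ℝ) (fun x => g (-x))
    simp only [neg_neg, neg_zero] at this
    rw [this]
    apply setIntegral_congr_fun measurableSet_Ioi
    intro x hx
    simp only [g, abs_neg]
    rw [abs_of_nonneg (le_of_lt hx)]
    ring_nf
  have hpos : (∫ x in Ioi (0:ℝ), g x) = ∫ x in Ioi (0:ℝ), phi (x - k) * Phi (lam * x) := by
    apply setIntegral_congr_fun measurableSet_Ioi
    intro x hx
    simp only [g]
    rw [abs_of_nonneg (le_of_lt hx)]
  rw [hsplit, hneg, hpos, ← integral_add (integrableOn_piece k (-lam)) (integrableOn_piece k lam)]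
  have hone : (∫ x in Ioi (0:ℝ), (phi (x - k) * Phi (-lam * x) + phi (x - k) * Phi (lam * x)))
      = ∫ x in Ioi (0:ℝ), phi (x - k) := by
    apply setIntegral_congr_fun measurableSet_Ioi
    intro x _
    dsimp only
    rw [← mul_add]
    have : Phi (-lam * x) + Phi (lam * x) = 1 := by
      have := Phi_add_neg (lam * x)
      rw [show -lam * x = -(lam * x) by ring]
      linarith
    rw [this, mul_one]
  rw [hone, integral_shift_Ioi]
  have h2 : (∫ x in Iic (-k), phi x) + (∫ x in Ioi (-k), phi x) = 1 := by
    rw [intervalIntegral.integral_Iic_add_Ioi integrable_phi.integrableOn integrable_phi.integrableOn, integral_phi]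
  have h3 : (∫ x in Iic (-k), phi x) = Phi (-k) := rfl
  have h4 := Phi_add_neg k
  rw [h3] at h2
  linarith

theorem stmt_13 (k lam : ℝ) :
    let f : ℝ → ℝ := fun x => phi (|x| - k) * Phi (lam * x) / Phi k
    (∫ x, phi (|x| - k) * Phi (lam * x)) = Phi k ∧
      (∀ x, 0 ≤ f x) ∧ (∫ x, f x) = 1 := by
  intro f
  refine ⟨integral_main k lam, ?_, ?_⟩
  · intro x
    exact div_nonneg (mul_nonneg (phi_nonneg _) (Phi_nonneg _)) (Phi_pos k).le
  · have : (∫ x, f x) = (∫ x, phi (|x| - k) * Phi (lam * x)) / Phi k := integral_div _ _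
    rw [this, integral_main k lam, div_self (Phi_pos k).ne']
end

section
/- Let μ ∈ ℝ, σ > 0, k, a ∈ ℝ and let ψ(x) = exp(k|x−μ|/σ) φ((x−μ−a)/σ), where φ is the standard normal density. Then the set of local maximum points of ψ is: {μ+a−σk, μ+a+σk} if σk > |a|; {μ+a−σk} if a < σk < −a; {μ+a+σk} if −a < σk < a; and {μ} if σk ≤ −|a|. In particular the BUN density is bimodal exactly when σk > |a|, with modes μ+a±σk. -/
open MeasureTheory Real Set

/-!
Up to a positive factor, `ψ = exp (E / (2σ²))` with `E x = 2σk|x - μ| - (x - μ - a)²`, so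
`ψ` and `E` have the same local maxima. On each side of `μ`, `E` is a downward parabola, with
vertex `μ + a + σk` on the right and `μ + a - σk` on the left. A point `m ≠ μ` is therefore a
local maximum exactly when it is the vertex of the parabola on its side, and `μ` is one exactly
when the right vertex lies at or left of `μ` and the left vertex at or right of `μ`, i.e. when
`σk ≤ -|a|`.
-/

open Filter Topology

theorem StrictMono.isLocalMax_comp_iff {α β γ : Type*} [TopologicalSpace α] [LinearOrder β]
    [Preorder γ] {g : β → γ} (hg : StrictMono g) {f : α → β} {a : α} :
    IsLocalMax (g ∘ f) a ↔ IsLocalMax f a :=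
  eventually_congr (.of_forall fun _ => hg.le_iff_le)

theorem isLocalMax_iff_isLocalMaxOn_Iic_and_Ici {α β : Type*} [TopologicalSpace α]
    [LinearOrder α] [OrderTopology α] [Preorder β] {f : α → β} {a : α} :
    IsLocalMax f a ↔ IsLocalMaxOn f (Iic a) a ∧ IsLocalMaxOn f (Ici a) a := by
  rw [IsLocalMax, IsMaxFilter, ← nhdsLE_sup_nhdsGE, eventually_sup]
  rfl

theorem isLocalMaxOn_Ici_sub_sq_iff {c v b : ℝ} :
    IsLocalMaxOn (fun x => c - (x - v) ^ 2) (Ici b) b ↔ v ≤ b := by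
  refine ⟨fun h => ?_, fun h => eventually_nhdsWithin_of_forall fun x (hx : b ≤ x) => ?_⟩
  · by_contra! hbv
    obtain ⟨x, hx, hxb, hxv⟩ :=
      ((h.filter_mono (nhdsWithin_mono _ Ioi_subset_Ici_self)).and (Ioo_mem_nhdsGT hbv)).exists
    simp only at hx
    nlinarith
  · simp only
    nlinarith

theorem isLocalMaxOn_Iic_sub_sq_iff {c v b : ℝ} :
    IsLocalMaxOn (fun x => c - (x - v) ^ 2) (Iic b) b ↔ b ≤ v := by
  refine ⟨fun h => ?_, fun h => eventually_nhdsWithin_of_forall fun x (hx : x ≤ b) => ?_⟩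
  · by_contra! hbv
    obtain ⟨x, hx, hxv, hxb⟩ :=
      ((h.filter_mono (nhdsWithin_mono _ Iio_subset_Iic_self)).and (Ioo_mem_nhdsLT hbv)).exists
    simp only at hx
    nlinarith
  · simp only
    nlinarith

theorem isLocalMax_sub_sq_iff {c v m : ℝ} :
    IsLocalMax (fun x => c - (x - v) ^ 2) m ↔ m = v := by
  rw [isLocalMax_iff_isLocalMaxOn_Iic_and_Ici, isLocalMaxOn_Iic_sub_sq_iff,
    isLocalMaxOn_Ici_sub_sq_iff, le_antisymm_iff]

def bunExponent (μ a s x : ℝ) : ℝ := 2 * s * |x - μ| - (x - μ - a) ^ 2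

section
variable {μ a s x : ℝ}

theorem bunExponent_of_le (hx : μ ≤ x) :
    bunExponent μ a s x = (a + s) ^ 2 - a ^ 2 - (x - (μ + a + s)) ^ 2 := by
  rw [bunExponent, abs_of_nonneg (sub_nonneg.2 hx)]
  ring

theorem bunExponent_of_ge (hx : x ≤ μ) :
    bunExponent μ a s x = (a - s) ^ 2 - a ^ 2 - (x - (μ + a - s)) ^ 2 := by
  rw [bunExponent, abs_of_nonpos (sub_nonpos.2 hx)]
  ring

theorem isLocalMax_bunExponent_iff {m : ℝ} :
    IsLocalMax (bunExponent μ a s) m ↔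
      (m = μ + a + s ∧ μ < m) ∨ (m = μ + a - s ∧ m < μ) ∨ (m = μ ∧ s ≤ -|a|) := by
  rcases lt_trichotomy m μ with hm | rfl | hm
  · have heq : bunExponent μ a s =ᶠ[𝓝 m]
        fun x => (a - s) ^ 2 - a ^ 2 - (x - (μ + a - s)) ^ 2 :=
      eventually_of_mem (Iio_mem_nhds hm) fun x hx => bunExponent_of_ge (le_of_lt hx)
    rw [heq.isLocalMax_iff, isLocalMax_sub_sq_iff]
    simp [hm, hm.ne, hm.not_gt]
  · have hleft : bunExponent m a s =ᶠ[𝓝[Iic m] m]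
        fun x => (a - s) ^ 2 - a ^ 2 - (x - (m + a - s)) ^ 2 :=
      eventually_nhdsWithin_of_forall fun x hx => bunExponent_of_ge hx
    have hright : bunExponent m a s =ᶠ[𝓝[Ici m] m]
        fun x => (a + s) ^ 2 - a ^ 2 - (x - (m + a + s)) ^ 2 :=
      eventually_nhdsWithin_of_forall fun x hx => bunExponent_of_le hx
    rw [isLocalMax_iff_isLocalMaxOn_Iic_and_Ici, hleft.isLocalMaxOn_iff self_mem_Iic,
      hright.isLocalMaxOn_iff self_mem_Ici, isLocalMaxOn_Iic_sub_sq_iff,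
      isLocalMaxOn_Ici_sub_sq_iff, le_neg, abs_le]
    simp only [lt_self_iff_false, and_false, true_and, false_or]
    constructor <;> rintro ⟨h₁, h₂⟩ <;> constructor <;> linarith
  · have heq : bunExponent μ a s =ᶠ[𝓝 m]
        fun x => (a + s) ^ 2 - a ^ 2 - (x - (μ + a + s)) ^ 2 :=
      eventually_of_mem (Ioi_mem_nhds hm) fun x hx => bunExponent_of_le (le_of_lt hx)
    rw [heq.isLocalMax_iff, isLocalMax_sub_sq_iff]
    simp [hm, hm.ne', hm.not_gt]

theorem setOf_isLocalMax_bunExponent :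
    (|a| < s → {m | IsLocalMax (bunExponent μ a s) m} = {μ + a - s, μ + a + s}) ∧
      (a < s ∧ s < -a → {m | IsLocalMax (bunExponent μ a s) m} = {μ + a - s}) ∧
      (-a < s ∧ s < a → {m | IsLocalMax (bunExponent μ a s) m} = {μ + a + s}) ∧
      (s ≤ -|a| → {m | IsLocalMax (bunExponent μ a s) m} = {μ}) := by
  simp only [Set.ext_iff, mem_ofPred_eq, isLocalMax_bunExponent_iff, mem_insert_iff,
    mem_singleton_iff]
  have := abs_nonneg a
  have := le_abs_self a
  have := neg_abs_le a
  refine ⟨?_, ?_, ?_, ?_⟩ <;> intro h m <;> grind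
end

theorem stmt_15 (μ σ k a : ℝ) (hσ : 0 < σ) :
    let ψ : ℝ → ℝ := fun x => Real.exp (k * |x - μ| / σ) * phi ((x - μ - a) / σ)
    (|a| < σ * k →
        {m : ℝ | IsLocalMax ψ m} = {μ + a - σ * k, μ + a + σ * k}) ∧
      (a < σ * k ∧ σ * k < -a → {m : ℝ | IsLocalMax ψ m} = {μ + a - σ * k}) ∧
      (-a < σ * k ∧ σ * k < a → {m : ℝ | IsLocalMax ψ m} = {μ + a + σ * k}) ∧
      (σ * k ≤ -|a| → {m : ℝ | IsLocalMax ψ m} = {μ}) := by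
  intro ψ
  set g : ℝ → ℝ := fun t => (√(2 * π))⁻¹ * exp (t / (2 * σ ^ 2))
  have hψ : ψ = g ∘ bunExponent μ a (σ * k) := by
    ext x
    simp only [ψ, g, Function.comp_apply, phi, bunExponent]
    rw [mul_left_comm, ← exp_add]
    congr 2
    field_simp
    ring
  have hg : StrictMono g :=
    ((exp_strictMono.comp (strictMono_div_right_of_pos (by positivity))).const_mul (by positivity))
  simp only [hψ, hg.isLocalMax_comp_iff]
  exact setOf_isLocalMax_bunExponent
end

section
/- Let φ be the standard normal density and Φ its cdf, and fix k ∈ ℝ and b ∈ ℝ. Then for every z ≤ 0, ∫_{−∞}^z e^{k|w|} φ(w − b) dw = e^{−kb + k²/2} Φ(z + k − b), and for every z > 0, ∫_{−∞}^z e^{k|w|} φ(w − b) dw = e^{−kb + k²/2} Φ(k − b) + e^{kb + k²/2} (Φ(z − k − b) − Φ(−k − b)). In particular the cdf of the standard BUN(0,1,k,b) distribution is obtained by dividing these expressions by e^{kb+k²/2} Φ(k+b) + e^{−kb+k²/2} Φ(k−b). -/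
open MeasureTheory Real Set

lemma phi_integrable : MeasureTheory.Integrable phi := by
  have h : phi = fun x => (Real.sqrt (2 * Real.pi))⁻¹ * Real.exp (-(1/2 : ℝ) * x ^ 2) := by
    funext x; unfold phi; congr 1; ring
  rw [h]
  exact (integrable_exp_neg_mul_sq (by norm_num)).const_mul _

lemma shift_int (f : ℝ → ℝ) (z a : ℝ) :
    ∫ w in Set.Iic z, f (w - a) = ∫ w in Set.Iic (z - a), f w := by
  rw [← integral_indicator measurableSet_Iic, ← integral_indicator measurableSet_Iic,
    ← integral_sub_right_eq_self (fun w => (Set.Iic (z - a)).indicator f w) a]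
  congr 1
  funext w
  by_cases h : w ≤ z
  · simp [Set.indicator, Set.mem_Iic, h, sub_le_sub_iff_right, sub_le_sub_right h a]
  · simp [Set.indicator, Set.mem_Iic, h, fun hh : w - a ≤ z - a => h (by linarith)]

lemma complete_square (c b w : ℝ) :
    Real.exp (c * w) * phi (w - b) = Real.exp (c * b + c ^ 2 / 2) * phi (w - b - c) := by
  simp only [phi, ← mul_assoc]
  rw [mul_comm (Real.exp (c * w)) _, mul_comm (Real.exp (c * b + c ^ 2 / 2)) _]
  simp only [mul_assoc, ← Real.exp_add]
  congr 1
  ring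

lemma exp_phi_integrable (c b : ℝ) :
    MeasureTheory.Integrable (fun w => Real.exp (c * w) * phi (w - b)) := by
  have h : (fun w => Real.exp (c * w) * phi (w - b)) =
      fun w => Real.exp (c * b + c ^ 2 / 2) * phi (w - b - c) := by
    funext w; exact complete_square c b w
  rw [h]
  have := (phi_integrable.comp_sub_right (b + c))
  simpa [sub_sub] using this.const_mul (Real.exp (c * b + c ^ 2 / 2))

lemma main_int (c b z : ℝ) :
    ∫ w in Set.Iic z, Real.exp (c * w) * phi (w - b)
      = Real.exp (c * b + c ^ 2 / 2) * Phi (z - b - c) := by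
  calc ∫ w in Set.Iic z, Real.exp (c * w) * phi (w - b)
      = ∫ w in Set.Iic z, Real.exp (c * b + c ^ 2 / 2) * phi (w - (b + c)) := by
        apply setIntegral_congr_fun measurableSet_Iic
        intro w _; dsimp only; rw [complete_square c b w, sub_sub]
    _ = Real.exp (c * b + c ^ 2 / 2) * ∫ w in Set.Iic z, phi (w - (b + c)) :=
        integral_const_mul _ _
    _ = Real.exp (c * b + c ^ 2 / 2) * Phi (z - b - c) := by
        rw [shift_int phi z (b + c), Phi, sub_sub]

lemma neg_part (k b : ℝ) {z : ℝ} (hz : z ≤ 0) :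
    (∫ w in Set.Iic z, Real.exp (k * |w|) * phi (w - b))
      = Real.exp (-(k * b) + k ^ 2 / 2) * Phi (z + k - b) := by
  have h1 : ∫ w in Set.Iic z, Real.exp (k * |w|) * phi (w - b)
      = ∫ w in Set.Iic z, Real.exp ((-k) * w) * phi (w - b) := by
    apply setIntegral_congr_fun measurableSet_Iic
    intro w hw
    dsimp only; rw [abs_of_nonpos (le_trans hw hz)]; ring
  rw [h1, main_int (-k) b z]
  have : z - b - -k = z + k - b := by ring
  rw [this]; ring

theorem stmt_16 (k b : ℝ) :
    let δ : ℝ := Real.exp (k * b + k ^ 2 / 2) * Phi (k + b) +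
      Real.exp (-(k * b) + k ^ 2 / 2) * Phi (k - b)
    (∀ z ≤ (0 : ℝ),
        (∫ w in Set.Iic z, Real.exp (k * |w|) * phi (w - b))
          = Real.exp (-(k * b) + k ^ 2 / 2) * Phi (z + k - b)) ∧
      (∀ z > (0 : ℝ),
        (∫ w in Set.Iic z, Real.exp (k * |w|) * phi (w - b))
          = Real.exp (-(k * b) + k ^ 2 / 2) * Phi (k - b) +
            Real.exp (k * b + k ^ 2 / 2) * (Phi (z - k - b) - Phi (-k - b))) ∧
      (∀ z ≤ (0 : ℝ),
        (∫ w in Set.Iic z, δ⁻¹ * (Real.exp (k * |w|) * phi (w - b)))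
          = Real.exp (-(k * b) + k ^ 2 / 2) * Phi (z + k - b) / δ) ∧
      (∀ z > (0 : ℝ),
        (∫ w in Set.Iic z, δ⁻¹ * (Real.exp (k * |w|) * phi (w - b)))
          = (Real.exp (-(k * b) + k ^ 2 / 2) * Phi (k - b) +
            Real.exp (k * b + k ^ 2 / 2) * (Phi (z - k - b) - Phi (-k - b))) / δ) := by
  intro δ
  have pos_part : ∀ z > (0 : ℝ),
      (∫ w in Set.Iic z, Real.exp (k * |w|) * phi (w - b))
        = Real.exp (-(k * b) + k ^ 2 / 2) * Phi (k - b) +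
          Real.exp (k * b + k ^ 2 / 2) * (Phi (z - k - b) - Phi (-k - b)) := by
    intro z hz
    have hsplit : Set.Iic z = Set.Iic (0 : ℝ) ∪ Set.Ioc (0 : ℝ) z := by
      rw [Set.Iic_union_Ioc_eq_Iic hz.le]
    have hint : MeasureTheory.IntegrableOn (fun w => Real.exp (k * |w|) * phi (w - b))
        (Set.Iic z) := by
      apply MeasureTheory.Integrable.mono'
        ((exp_phi_integrable k b).add (exp_phi_integrable (-k) b)).integrableOn
      · apply Measurable.aestronglyMeasurable
        have hm : Measurable phi := by unfold phi; fun_prop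
        exact (Real.measurable_exp.comp (measurable_const.mul measurable_abs)).mul
          (hm.comp (measurable_id.sub measurable_const))
      · filter_upwards with w
        have hphi : 0 ≤ phi (w - b) := by
          unfold phi; positivity
        rw [Real.norm_eq_abs, abs_of_nonneg (mul_nonneg (Real.exp_pos _).le hphi)]
        dsimp only [Pi.add_apply]
        have h1 : 0 ≤ Real.exp (k * w) * phi (w - b) :=
          mul_nonneg (Real.exp_pos _).le hphi
        have h2 : 0 ≤ Real.exp (-k * w) * phi (w - b) :=
          mul_nonneg (Real.exp_pos _).le hphi
        rcases le_or_gt 0 w with h | h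
        · rw [abs_of_nonneg h]; linarith
        · rw [abs_of_neg h]
          have : k * -w = -k * w := by ring
          rw [this]; linarith
    rw [hsplit, MeasureTheory.setIntegral_union (Set.Iic_disjoint_Ioc le_rfl) measurableSet_Ioc
      (hint.mono_set (by rw [hsplit]; exact Set.subset_union_left))
      (hint.mono_set (by rw [hsplit]; exact Set.subset_union_right))]
    have h1 := neg_part k b (le_refl (0 : ℝ))
    rw [zero_add] at h1
    rw [h1]
    congr 1
    have h2 : ∫ w in Set.Ioc (0 : ℝ) z, Real.exp (k * |w|) * phi (w - b)
        = ∫ w in Set.Ioc (0 : ℝ) z, Real.exp (k * w) * phi (w - b) := by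
      apply setIntegral_congr_fun measurableSet_Ioc
      intro w hw
      dsimp only; rw [abs_of_pos hw.1]
    rw [h2]
    have h3 : ∫ w in Set.Ioc (0 : ℝ) z, Real.exp (k * w) * phi (w - b)
        = (∫ w in Set.Iic z, Real.exp (k * w) * phi (w - b))
          - ∫ w in Set.Iic (0 : ℝ), Real.exp (k * w) * phi (w - b) := by
      rw [eq_sub_iff_add_eq, ← MeasureTheory.setIntegral_union
        (Set.Iic_disjoint_Ioc le_rfl).symm measurableSet_Iic
        ((exp_phi_integrable k b).integrableOn) ((exp_phi_integrable k b).integrableOn)]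
      rw [Set.union_comm, Set.Iic_union_Ioc_eq_Iic hz.le]
    rw [h3, main_int k b z, main_int k b 0]
    have e1 : z - b - k = z - k - b := by ring
    have e2 : (0 : ℝ) - b - k = -k - b := by ring
    rw [e1, e2]
    ring
  refine ⟨fun z hz => neg_part k b hz, pos_part, ?_, ?_⟩
  · intro z hz
    rw [MeasureTheory.integral_const_mul, neg_part k b hz, div_eq_mul_inv]
    ring
  · intro z hz
    rw [MeasureTheory.integral_const_mul, pos_part z hz, div_eq_mul_inv]
    ring
end

section
/- Let φ be the standard normal density and Φ its cdf, and fix k, b ∈ ℝ. Then for every t ∈ ℝ, ∫_ℝ e^{tz} e^{k|z|} φ(z − b) dz = e^{(k+t)b + (k+t)²/2} Φ(k + b + t) + e^{−(k−t)b + (k−t)²/2} Φ(k − b − t). Consequently the moment generating function of the standard BUN(0,1,k,b) distribution is M_Z(t) = [e^{(k+t)b+(k+t)²/2} Φ(k+b+t) + e^{−(k−t)b+(k−t)²/2} Φ(k−b−t)] / [e^{kb+k²/2} Φ(k+b) + e^{−kb+k²/2} Φ(k−b)], which is finite for all t ∈ ℝ. -/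
open MeasureTheory Real Set

lemma phi_shift_eq (a b z : ℝ) :
    Real.exp (a * z) * phi (z - b) = Real.exp (a * b + a ^ 2 / 2) * phi (z - b - a) := by
  simp only [phi]
  rw [mul_left_comm, mul_left_comm (Real.exp (a * b + a ^ 2 / 2)), ← Real.exp_add,
    ← Real.exp_add]
  exact congrArg (fun u => (Real.sqrt (2 * Real.pi))⁻¹ * Real.exp u) (by ring)

lemma integrable_phi_shift (m : ℝ) : Integrable (fun z : ℝ => phi (z - m)) := by
  have h : Integrable (fun x : ℝ => Real.exp (-(1/2 : ℝ) * x ^ 2)) :=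
    integrable_exp_neg_mul_sq (by norm_num)
  have h2 : Integrable (fun z : ℝ => phi z) := by
    simpa [phi, neg_div, mul_comm, div_eq_mul_inv, mul_assoc, neg_mul] using
      (h.const_mul (Real.sqrt (2 * Real.pi))⁻¹).congr
        (by filter_upwards with x; simp [neg_div]; ring_nf)
  exact h2.comp_sub_right m

lemma integral_Iic_phi_shift (x m : ℝ) : (∫ z in Iic x, phi (z - m)) = Phi (x - m) := by
  rw [Phi, ← integral_indicator measurableSet_Iic, ← integral_indicator measurableSet_Iic]
  have : (fun z => (Iic x).indicator (fun z => phi (z - m)) z)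
      = fun z => (Iic (x - m)).indicator phi (z - m) := by
    funext z
    simp only [indicator_apply, mem_Iic]
    by_cases hz : z ≤ x
    · rw [if_pos hz, if_pos (by linarith)]
    · rw [if_neg hz, if_neg (by intro h; exact hz (by linarith))]
  rw [this, integral_sub_right_eq_self]

lemma integral_Ici_phi_shift (x m : ℝ) : (∫ z in Ici x, phi (z - m)) = Phi (m - x) := by
  rw [Phi, ← integral_indicator measurableSet_Ici, ← integral_indicator measurableSet_Iic]
  have : (fun z => (Ici x).indicator (fun z => phi (z - m)) z)
      = fun z => (Iic (m - x)).indicator phi (-(z - m)) := by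
    funext z
    simp only [indicator_apply, mem_Iic, mem_Ici]
    by_cases hz : x ≤ z
    · rw [if_pos hz, if_pos (by linarith)]
      exact (phi_even _).symm
    · rw [if_neg hz, if_neg (by intro h; exact hz (by linarith))]
  rw [this]
  rw [show (fun z : ℝ => (Iic (m - x)).indicator phi (-(z - m)))
      = fun z : ℝ => ((Iic (m - x)).indicator phi ∘ Neg.neg) (z - m) from rfl]
  rw [integral_sub_right_eq_self, show ((Iic (m - x)).indicator phi ∘ Neg.neg)
      = fun z => (Iic (m - x)).indicator phi (-z) from rfl, integral_neg_eq_self]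

theorem stmt_18 (k b : ℝ) :
    let c : ℝ := (Real.exp (k * b + k ^ 2 / 2) * Phi (k + b) +
      Real.exp (-(k * b) + k ^ 2 / 2) * Phi (k - b))⁻¹
    let f : ℝ → ℝ := fun z => c * Real.exp (k * |z|) * phi (z - b)
    ∀ t : ℝ,
      (∫ z, Real.exp (t * z) * (Real.exp (k * |z|) * phi (z - b)))
          = Real.exp ((k + t) * b + (k + t) ^ 2 / 2) * Phi (k + b + t) +
            Real.exp (-((k - t) * b) + (k - t) ^ 2 / 2) * Phi (k - b - t) ∧
        Integrable (fun z => Real.exp (t * z) * f z) ∧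
        (∫ z, Real.exp (t * z) * f z)
          = (Real.exp ((k + t) * b + (k + t) ^ 2 / 2) * Phi (k + b + t) +
              Real.exp (-((k - t) * b) + (k - t) ^ 2 / 2) * Phi (k - b - t)) /
            (Real.exp (k * b + k ^ 2 / 2) * Phi (k + b) +
              Real.exp (-(k * b) + k ^ 2 / 2) * Phi (k - b)) := by
  intro c f t
  set F : ℝ → ℝ := fun z => Real.exp (t * z) * (Real.exp (k * |z|) * phi (z - b)) with hF
  have hneg : EqOn F (fun z => Real.exp ((t - k) * b + (t - k) ^ 2 / 2) * phi (z - b - (t - k)))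
      (Iio 0) := by
    intro z hz
    have : |z| = -z := abs_of_neg hz
    rw [hF]
    simp only [this]
    rw [← phi_shift_eq (t - k) b z, ← mul_assoc, ← Real.exp_add]
    ring_nf
  have hpos : EqOn F (fun z => Real.exp ((t + k) * b + (t + k) ^ 2 / 2) * phi (z - b - (t + k)))
      (Ici 0) := by
    intro z hz
    have : |z| = z := abs_of_nonneg hz
    rw [hF]
    simp only [this]
    rw [← phi_shift_eq (t + k) b z, ← mul_assoc, ← Real.exp_add]
    ring_nf
  have hIntNeg : IntegrableOn F (Iio 0) := by
    refine (((integrable_phi_shift (b + (t - k))).const_mul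
      (Real.exp ((t - k) * b + (t - k) ^ 2 / 2))).integrableOn).congr_fun ?_ measurableSet_Iio
    intro z hz
    rw [hneg hz]
    ring_nf
  have hIntPos : IntegrableOn F (Ici 0) := by
    refine (((integrable_phi_shift (b + (t + k))).const_mul
      (Real.exp ((t + k) * b + (t + k) ^ 2 / 2))).integrableOn).congr_fun ?_ measurableSet_Ici
    intro z hz
    rw [hpos hz]
    ring_nf
  have hInt : Integrable F := by
    rw [← integrableOn_univ, ← Iio_union_Ici (a := (0:ℝ))]
    exact hIntNeg.union hIntPos
  have hIneg : (∫ z in Iio 0, F z)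
      = Real.exp (-((k - t) * b) + (k - t) ^ 2 / 2) * Phi (k - b - t) := by
    rw [setIntegral_congr_fun measurableSet_Iio hneg, integral_const_mul]
    have : ∀ z : ℝ, z - b - (t - k) = z - (b + (t - k)) := by intro z; ring
    simp_rw [this]
    rw [setIntegral_congr_set Iio_ae_eq_Iic, integral_Iic_phi_shift]
    rw [show (0:ℝ) - (b + (t - k)) = k - b - t by ring, show -((k - t) * b) + (k - t) ^ 2 / 2
      = (t - k) * b + (t - k) ^ 2 / 2 by ring]
  have hIpos : (∫ z in Ici 0, F z)
      = Real.exp ((k + t) * b + (k + t) ^ 2 / 2) * Phi (k + b + t) := by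
    rw [setIntegral_congr_fun measurableSet_Ici hpos, integral_const_mul]
    have : ∀ z : ℝ, z - b - (t + k) = z - (b + (t + k)) := by intro z; ring
    simp_rw [this]
    rw [integral_Ici_phi_shift]
    rw [show b + (t + k) - 0 = k + b + t by ring, show (k + t) * b + (k + t) ^ 2 / 2
      = (t + k) * b + (t + k) ^ 2 / 2 by ring]
  have hmain : (∫ z, F z)
      = Real.exp ((k + t) * b + (k + t) ^ 2 / 2) * Phi (k + b + t) +
        Real.exp (-((k - t) * b) + (k - t) ^ 2 / 2) * Phi (k - b - t) := by
    rw [← intervalIntegral.integral_Iio_add_Ici hIntNeg hIntPos, hIneg, hIpos, add_comm]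
  refine ⟨hmain, ?_, ?_⟩
  · have : (fun z => Real.exp (t * z) * f z) = fun z => c * F z := by
      funext z; simp only [f, hF]; ring
    rw [this]
    exact hInt.const_mul c
  · have : (fun z => Real.exp (t * z) * f z) = fun z => c * F z := by
      funext z; simp only [f, hF]; ring
    have hc : c = (Real.exp (k * b + k ^ 2 / 2) * Phi (k + b) +
      Real.exp (-(k * b) + k ^ 2 / 2) * Phi (k - b))⁻¹ := rfl
    rw [this, integral_const_mul, hmain, hc]
    exact (mul_comm _ _).trans (div_eq_mul_inv _ _).symm
end

section
/- Fix μ ∈ ℝ, σ > 0 and k > 0, and let h(x) = (1 + ((x−μ)/σ)²) e^{−k|(x−μ)/σ|} (proportional to the symmetric BUL(μ,σ,k) density). If 0 < k < 1, the set of local maximum points of h is exactly {μ, μ + σ(1/k + √(1/k² − 1)), μ − σ(1/k + √(1/k² − 1))}, so the density is trimodal with outer modes μ ± σ(1/k + √(1/k² − 1)); if k ≥ 1, the unique local maximum point of h is μ. -/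
/-!
With `u = (x - μ) / σ` the function is `g |u|` for `g t = (1 + t²) e^{-kt}`, and
`g' t = e^{-kt} (2t - k(1 + t²))`. For `k < 1` the quadratic factors as `k (t - t₋) (t₊ - t)` with
`t± = 1/k ± √(1/k² - 1)` and `t₋ t₊ = 1`, so on `[0, ∞)` the profile `g` falls, rises, then falls
again, with a single interior peak at `t₊`; for `k ≥ 1` the quadratic is `≤ -(t - 1)²` and `g` is
strictly decreasing. The local maxima of `g |u|` are therefore `0, ±t₊`, respectively only `0`.
-/

open Filter Real Set Topology

section LocalMax

variable {α β : Type*} [TopologicalSpace α] [LinearOrder α] [Preorder β] {f : α → β}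
  {s : Set α} {a : α}

theorem not_isLocalMax_of_strictAntiOn [(𝓝[<] a).NeBot] (hs : s ∈ 𝓝[≤] a)
    (hf : StrictAntiOn f s) : ¬IsLocalMax f a := by
  intro hmax
  have has : a ∈ s := mem_of_mem_nhdsWithin self_mem_Iic hs
  have hxs : ∀ᶠ x in 𝓝[<] a, x ∈ s := nhdsWithin_mono a Iio_subset_Iic_self hs
  have hxa : ∀ᶠ x in 𝓝[<] a, x < a := self_mem_nhdsWithin
  have hfx : ∀ᶠ x in 𝓝[<] a, f x ≤ f a := nhdsWithin_le_nhds hmax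
  obtain ⟨x, hxs, hxa, hfx⟩ := (hxs.and (hxa.and hfx)).exists
  exact (hf hxs has hxa).not_ge hfx

theorem not_isLocalMax_of_strictMonoOn [(𝓝[>] a).NeBot] (hs : s ∈ 𝓝[≥] a)
    (hf : StrictMonoOn f s) : ¬IsLocalMax f a := by
  intro hmax
  have has : a ∈ s := mem_of_mem_nhdsWithin self_mem_Ici hs
  have hxs : ∀ᶠ x in 𝓝[>] a, x ∈ s := nhdsWithin_mono a Ioi_subset_Ici_self hs
  have hax : ∀ᶠ x in 𝓝[>] a, a < x := self_mem_nhdsWithin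
  have hfx : ∀ᶠ x in 𝓝[>] a, f x ≤ f a := nhdsWithin_le_nhds hmax
  obtain ⟨x, hxs, hax, hfx⟩ := (hxs.and (hax.and hfx)).exists
  exact (hf has hxs hax).not_ge hfx

end LocalMax

section RealLocalMax

variable {β : Type*} [Preorder β]

theorem isLocalMax_comp_div_sub_iff {F : ℝ → β} {μ σ m : ℝ} (hσ : σ ≠ 0) :
    IsLocalMax (fun x => F ((x - μ) / σ)) m ↔ IsLocalMax F ((m - μ) / σ) := by
  refine ⟨fun h => ?_, fun h => h.comp_continuous (g := fun x => (x - μ) / σ) (by fun_prop)⟩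
  have h' : IsLocalMax (fun x => F ((x - μ) / σ)) (μ + σ * ((m - μ) / σ)) := by
    rwa [mul_div_cancel₀ _ hσ, add_sub_cancel]
  convert h'.comp_continuous (g := fun u => μ + σ * u) (by fun_prop) using 1
  funext u
  simp [hσ]

theorem isLocalMax_comp_neg_iff {F : ℝ → β} {u : ℝ} :
    IsLocalMax (fun x => F (-x)) u ↔ IsLocalMax F (-u) := by
  refine ⟨fun h => ?_, fun h => h.comp_continuous continuous_neg.continuousAt⟩
  rw [← neg_neg u] at h
  simpa [Function.comp_def] using h.comp_continuous continuous_neg.continuousAt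

theorem isLocalMax_comp_abs_iff {g : ℝ → β} {u : ℝ} (hu : u ≠ 0) :
    IsLocalMax (fun x => g |x|) u ↔ IsLocalMax g |u| := by
  rcases hu.lt_or_gt with hu | hu
  · have heq : (fun x => g |x|) =ᶠ[𝓝 u] fun x => g (-x) := by
      filter_upwards [eventually_lt_nhds hu] with x hx
      rw [abs_of_neg hx]
    rw [heq.isLocalMax_iff, isLocalMax_comp_neg_iff, abs_of_neg hu]
  · have heq : (fun x => g |x|) =ᶠ[𝓝 u] g := by
      filter_upwards [eventually_gt_nhds hu] with x hx
      rw [abs_of_pos hx]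
    rw [heq.isLocalMax_iff, abs_of_pos hu]

theorem isLocalMax_comp_abs_zero {g : ℝ → β} {ε : ℝ} (hε : 0 < ε)
    (hg : AntitoneOn g (Icc 0 ε)) : IsLocalMax (fun x => g |x|) 0 := by
  refine IsMaxOn.isLocalMax (s := Ioo (-ε) ε) (fun x hx => ?_) (Ioo_mem_nhds (by linarith) hε)
  simp only [mem_ofPred_eq, abs_zero]
  exact hg ⟨le_rfl, hε.le⟩ ⟨abs_nonneg x, (abs_lt.2 hx).le⟩ (abs_nonneg x)

end RealLocalMax

theorem div_sub_eq_iff_eq_add_mul {m μ σ c : ℝ} (hσ : σ ≠ 0) :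
    (m - μ) / σ = c ↔ m = μ + σ * c := by
  rw [div_eq_iff hσ]
  constructor <;> intro h <;> linarith

noncomputable def bulProfile (k t : ℝ) : ℝ := (1 + t ^ 2) * exp (-(k * t))

noncomputable def bulOuterMode (k : ℝ) : ℝ := 1 / k + √(1 / k ^ 2 - 1)

noncomputable def bulAntimode (k : ℝ) : ℝ := 1 / k - √(1 / k ^ 2 - 1)

section Profile

variable {k : ℝ}

theorem hasDerivAt_bulProfile (k t : ℝ) :
    HasDerivAt (bulProfile k) (exp (-(k * t)) * (2 * t - k * (1 + t ^ 2))) t := by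
  have hpoly : HasDerivAt (fun t => 1 + t ^ 2) (2 * t) t := by
    simpa using (hasDerivAt_pow 2 t).const_add 1
  have hexp : HasDerivAt (fun t => exp (-(k * t))) (exp (-(k * t)) * -k) t := by
    simpa using ((hasDerivAt_id t).const_mul k).neg.exp
  have h : HasDerivAt (bulProfile k)
      (2 * t * exp (-(k * t)) + (1 + t ^ 2) * (exp (-(k * t)) * -k)) t := hpoly.mul hexp
  convert h using 1
  ring

theorem continuous_bulProfile (k : ℝ) : Continuous (bulProfile k) := by
  unfold bulProfile; fun_prop

theorem strictMonoOn_bulProfile {D : Set ℝ} (hD : Convex ℝ D)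
    (h : ∀ t ∈ interior D, 0 < 2 * t - k * (1 + t ^ 2)) : StrictMonoOn (bulProfile k) D :=
  strictMonoOn_of_deriv_pos hD (continuous_bulProfile k).continuousOn fun t ht => by
    rw [(hasDerivAt_bulProfile k t).deriv]; exact mul_pos (exp_pos _) (h t ht)

theorem strictAntiOn_bulProfile {D : Set ℝ} (hD : Convex ℝ D)
    (h : ∀ t ∈ interior D, 2 * t - k * (1 + t ^ 2) < 0) : StrictAntiOn (bulProfile k) D :=
  strictAntiOn_of_deriv_neg hD (continuous_bulProfile k).continuousOn fun t ht => by
    rw [(hasDerivAt_bulProfile k t).deriv]; exact mul_neg_of_pos_of_neg (exp_pos _) (h t ht)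

theorem sq_sqrt_one_div_sq_sub_one (hk : 0 < k) (hk1 : k ≤ 1) :
    √(1 / k ^ 2 - 1) ^ 2 = 1 / k ^ 2 - 1 :=
  sq_sqrt (sub_nonneg.2 ((one_le_div (by positivity)).2 (pow_le_one₀ hk.le hk1)))

theorem bulAntimode_mul_bulOuterMode (hk : 0 < k) (hk1 : k ≤ 1) :
    bulAntimode k * bulOuterMode k = 1 := by
  have := sq_sqrt_one_div_sq_sub_one hk hk1
  unfold bulAntimode bulOuterMode
  linear_combination -this

theorem two_mul_sub_mul_one_add_sq_eq (hk : 0 < k) (hk1 : k ≤ 1) (t : ℝ) :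
    2 * t - k * (1 + t ^ 2) = k * (t - bulAntimode k) * (bulOuterMode k - t) := by
  have := sq_sqrt_one_div_sq_sub_one hk hk1
  unfold bulAntimode bulOuterMode
  generalize √(1 / k ^ 2 - 1) = s at this ⊢
  field_simp at this ⊢
  linear_combination -this

theorem bulAntimode_le_bulOuterMode (k : ℝ) : bulAntimode k ≤ bulOuterMode k := by
  unfold bulAntimode bulOuterMode; linarith [sqrt_nonneg (1 / k ^ 2 - 1)]

theorem bulAntimode_lt_bulOuterMode (hk : 0 < k) (hk1 : k < 1) :
    bulAntimode k < bulOuterMode k := by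
  have : 0 < √(1 / k ^ 2 - 1) :=
    sqrt_pos.2 (sub_pos.2 ((one_lt_div (by positivity)).2 (pow_lt_one₀ hk.le hk1 two_ne_zero)))
  unfold bulAntimode bulOuterMode; linarith

theorem bulOuterMode_pos (hk : 0 < k) : 0 < bulOuterMode k := by
  unfold bulOuterMode; positivity

theorem bulAntimode_pos (hk : 0 < k) (hk1 : k ≤ 1) : 0 < bulAntimode k := by
  rw [eq_one_div_of_mul_eq_one_left (bulAntimode_mul_bulOuterMode hk hk1)]
  exact one_div_pos.2 (bulOuterMode_pos hk)

theorem strictAntiOn_bulProfile_Icc_zero_bulAntimode (hk : 0 < k) (hk1 : k ≤ 1) :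
    StrictAntiOn (bulProfile k) (Icc 0 (bulAntimode k)) := by
  refine strictAntiOn_bulProfile (convex_Icc _ _) fun t ht => ?_
  rw [interior_Icc] at ht
  have := bulAntimode_le_bulOuterMode k
  rw [two_mul_sub_mul_one_add_sq_eq hk hk1]
  exact mul_neg_of_neg_of_pos (mul_neg_of_pos_of_neg hk (by linarith [ht.2])) (by linarith [ht.2])

theorem strictMonoOn_bulProfile_Icc_bulAntimode_bulOuterMode (hk : 0 < k) (hk1 : k ≤ 1) :
    StrictMonoOn (bulProfile k) (Icc (bulAntimode k) (bulOuterMode k)) := by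
  refine strictMonoOn_bulProfile (convex_Icc _ _) fun t ht => ?_
  rw [interior_Icc] at ht
  rw [two_mul_sub_mul_one_add_sq_eq hk hk1]
  exact mul_pos (mul_pos hk (by linarith [ht.1])) (by linarith [ht.2])

theorem strictAntiOn_bulProfile_Ici_bulOuterMode (hk : 0 < k) (hk1 : k ≤ 1) :
    StrictAntiOn (bulProfile k) (Ici (bulOuterMode k)) := by
  refine strictAntiOn_bulProfile (convex_Ici _) fun t ht => ?_
  rw [interior_Ici] at ht
  have := bulAntimode_le_bulOuterMode k
  rw [two_mul_sub_mul_one_add_sq_eq hk hk1]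
  exact mul_neg_of_pos_of_neg (mul_pos hk (by linarith [mem_Ioi.1 ht]))
    (by linarith [mem_Ioi.1 ht])

theorem strictAntiOn_bulProfile_Ici_zero (hk1 : 1 ≤ k) : StrictAntiOn (bulProfile k) (Ici 0) := by
  -- the derivative vanishes at most at `t = 1`, so we split there
  have hneg : ∀ t, t ≠ 1 → 2 * t - k * (1 + t ^ 2) < 0 := fun t ht => by
    have : 0 < (t - 1) ^ 2 := by positivity [sub_ne_zero.2 ht]
    nlinarith [sq_nonneg t]
  rw [← Icc_union_Ici_eq_Ici zero_le_one]
  refine (strictAntiOn_bulProfile (convex_Icc _ _) fun t ht => hneg t ?_).union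
    (strictAntiOn_bulProfile (convex_Ici _) fun t ht => hneg t ?_) (isGreatest_Icc zero_le_one)
    isLeast_Ici
  · rw [interior_Icc] at ht; exact ht.2.ne
  · rw [interior_Ici] at ht; exact (mem_Ioi.1 ht).ne'

theorem isLocalMax_bulProfile_iff (hk : 0 < k) (hk1 : k < 1) {t : ℝ} (ht : 0 < t) :
    IsLocalMax (bulProfile k) t ↔ t = bulOuterMode k := by
  have h₁ := bulAntimode_lt_bulOuterMode hk hk1
  have hanti := strictAntiOn_bulProfile_Icc_zero_bulAntimode hk hk1.le
  have hmono := strictMonoOn_bulProfile_Icc_bulAntimode_bulOuterMode hk hk1.le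
  have hanti' := strictAntiOn_bulProfile_Ici_bulOuterMode hk hk1.le
  refine ⟨fun hmax => ?_, fun h => ?_⟩
  · by_contra! hne
    rcases le_or_gt t (bulAntimode k) with hta | hat
    · exact not_isLocalMax_of_strictAntiOn (Icc_mem_nhdsLE_of_mem ⟨ht, hta⟩) hanti hmax
    rcases Ne.lt_or_gt hne with htc | hct
    · exact not_isLocalMax_of_strictMonoOn (Icc_mem_nhdsGE_of_mem ⟨hat.le, htc⟩) hmono hmax
    · exact not_isLocalMax_of_strictAntiOn (mem_nhdsWithin_of_mem_nhds (Ici_mem_nhds hct))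
        hanti' hmax
  · subst h
    exact isLocalMax_of_mono_anti' (Icc_mem_nhdsLE h₁) self_mem_nhdsWithin hmono.monotoneOn
      hanti'.antitoneOn

theorem isLocalMax_bulProfile_abs_iff_of_lt_one (hk : 0 < k) (hk1 : k < 1) {u : ℝ} :
    IsLocalMax (fun x => bulProfile k |x|) u ↔
      u = 0 ∨ u = bulOuterMode k ∨ u = -bulOuterMode k := by
  rcases eq_or_ne u 0 with rfl | hu
  · simpa using isLocalMax_comp_abs_zero (bulAntimode_pos hk hk1.le)
      (strictAntiOn_bulProfile_Icc_zero_bulAntimode hk hk1.le).antitoneOn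
  · rw [isLocalMax_comp_abs_iff hu, isLocalMax_bulProfile_iff hk hk1 (abs_pos.2 hu),
      abs_eq (bulOuterMode_pos hk).le]
    simp [hu]

theorem isLocalMax_bulProfile_abs_iff_of_one_le (hk1 : 1 ≤ k) {u : ℝ} :
    IsLocalMax (fun x => bulProfile k |x|) u ↔ u = 0 := by
  have hanti := strictAntiOn_bulProfile_Ici_zero hk1
  rcases eq_or_ne u 0 with rfl | hu
  · simpa using isLocalMax_comp_abs_zero one_pos (hanti.mono Icc_subset_Ici_self).antitoneOn
  · rw [isLocalMax_comp_abs_iff hu]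
    simpa [hu] using not_isLocalMax_of_strictAntiOn
      (mem_nhdsWithin_of_mem_nhds (Ici_mem_nhds (abs_pos.2 hu))) hanti

end Profile

theorem stmt_19 (μ σ k : ℝ) (hσ : 0 < σ) (hk : 0 < k) :
    let h : ℝ → ℝ := fun x =>
      (1 + ((x - μ) / σ) ^ 2) * Real.exp (-(k * |(x - μ) / σ|))
    (k < 1 →
        {m : ℝ | IsLocalMax h m} =
          {μ, μ + σ * (1 / k + Real.sqrt (1 / k ^ 2 - 1)),
            μ - σ * (1 / k + Real.sqrt (1 / k ^ 2 - 1))}) ∧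
      (1 ≤ k → {m : ℝ | IsLocalMax h m} = {μ}) := by
  intro h
  have hh : ∀ m, IsLocalMax h m ↔ IsLocalMax (fun u => bulProfile k |u|) ((m - μ) / σ) := by
    intro m
    rw [← isLocalMax_comp_div_sub_iff hσ.ne']
    simp only [h, bulProfile, sq_abs]
  have hμ : ∀ m, (m - μ) / σ = 0 ↔ m = μ := fun m => by
    simpa using div_sub_eq_iff_eq_add_mul (c := 0) (m := m) (μ := μ) hσ.ne'
  refine ⟨fun hk1 => ?_, fun hk1 => ?_⟩ <;> ext m <;>
    simp only [mem_ofPred_eq, mem_insert_iff, mem_singleton_iff, hh]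
  · rw [isLocalMax_bulProfile_abs_iff_of_lt_one hk hk1, hμ, div_sub_eq_iff_eq_add_mul hσ.ne',
      div_sub_eq_iff_eq_add_mul hσ.ne', mul_neg, ← sub_eq_add_neg, bulOuterMode]
  · rw [isLocalMax_bulProfile_abs_iff_of_one_le hk1, hμ]
end
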